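/- arXiv:2508.03597 — 7 statements merged into one kernel-verified Lean document; each statement's English description precedes it below -/
import Mathlib

section
/- Let q be an odd prime power with q - 1 = (N-1)s, N ≥ 3, s ≥ 2, and let g be a primitive element of F_q. Define the N×N matrix A over F_q whose first row is all ones; whose row i (for 2 ≤ i ≤ N-1) is (0, 1, g^{(i-1)s}, g^{2(i-1)s}, …, g^{(N-2)(i-1)s}); and whose last row is (0, 1, 1, …, 1). Then A·Aᵀ equals the matrix M with M_{1,1} = N, M_{1,N} = M_{N,1} = M_{N,N} = N-1, M_{i, N+1-i} = N-1 for 2 ≤ i ≤ N-1, and all other entries zero. -/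
open Matrix

/-- The N×N matrix A over F_q from Theorem `infinite-type I`:
first row all ones; row i (2 ≤ i ≤ N-1, 1-based; here 0-based index i with
1 ≤ i ≤ N-2) equal to (0, 1, g^{is}, g^{2is}, …, g^{(N-2)is}); last row (0,1,…,1). -/
def matA {F : Type*} [Field F] (N s : ℕ) (g : F) : Matrix (Fin N) (Fin N) F :=
  Matrix.of fun i j =>
    if i.val = 0 then 1
    else if j.val = 0 then 0
    else if i.val = N - 1 then 1
    else g ^ ((j.val - 1) * i.val * s)

lemma geom_aux {F : Type*} [Field F] (h : F) (n : ℕ) (hn : orderOf h = n)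
    (k : ℕ) :
    ∑ m ∈ Finset.range n, h ^ (k * m) = if n ∣ k then (n : F) else 0 := by
  by_cases hd : n ∣ k
  · rw [if_pos hd]
    have h1 : h ^ k = 1 := orderOf_dvd_iff_pow_eq_one.mp (hn ▸ hd)
    have : ∀ m ∈ Finset.range n, h ^ (k * m) = 1 := by
      intro m _; rw [pow_mul, h1, one_pow]
    rw [Finset.sum_congr rfl this]; simp
  · rw [if_neg hd]
    have hx : h ^ k ≠ 1 := fun h1 => hd (hn ▸ orderOf_dvd_of_pow_eq_one h1)
    have e1 : ∑ m ∈ Finset.range n, h ^ (k * m) = ∑ m ∈ Finset.range n, (h ^ k) ^ m := by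
      simp [pow_mul]
    have e2 : (h ^ k) ^ n = 1 := by
      rw [← pow_mul, mul_comm, pow_mul, ← hn, pow_orderOf_eq_one, one_pow]
    rw [e1, geom_sum_eq hx, e2]
    simp

/-- computation of A·Aᵀ. -/
theorem stmt_2 (p e q N s : ℕ) (hp : p.Prime) (hodd : Odd p) (he : 0 < e)
    (hq : q = p ^ e) (hN : 3 ≤ N) (hs : 2 ≤ s) (hNs : q - 1 = (N - 1) * s)
    {F : Type*} [Field F] [Fintype F] (hF : Fintype.card F = q)
    (g : F) (hg : orderOf g = q - 1) :
    matA N s g * (matA N s g)ᵀ =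
      Matrix.of fun i j : Fin N =>
        if i.val = 0 ∧ j.val = 0 then (N : F)
        else if i.val + j.val = N - 1 then ((N - 1 : ℕ) : F)
        else if i.val = N - 1 ∧ j.val = N - 1 then ((N - 1 : ℕ) : F)
        else 0 := by
  obtain ⟨m, rfl⟩ : ∃ m, N = m + 1 := ⟨N - 1, by omega⟩
  have hm : 2 ≤ m := by omega
  have hs0 : 0 < s := by omega
  simp only [Nat.add_sub_cancel] at hNs ⊢
  have hhord : orderOf (g ^ s) = m := by
    rw [orderOf_pow' g (by omega : s ≠ 0), hg, hNs, Nat.gcd_eq_right (dvd_mul_left s m),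
      Nat.mul_div_cancel _ hs0]
  have key : ∀ (i k : Fin (m+1)), k.val ≠ 0 →
      matA (m+1) s g i k = (g ^ s) ^ (i.val * (k.val - 1)) := by
    intro i k hk
    unfold matA
    simp only [Matrix.of_apply, Nat.add_sub_cancel]
    by_cases hi : i.val = 0
    · simp [hi]
    · rw [if_neg hi, if_neg hk]
      by_cases hiN : i.val = m
      · have h1 : (g ^ s) ^ m = 1 := by rw [← hhord]; exact pow_orderOf_eq_one _
        rw [if_pos hiN, hiN, pow_mul, h1, one_pow]
      · rw [if_neg hiN, ← pow_mul]
        congr 1; ring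
  ext i j
  rw [Matrix.mul_apply, Fin.sum_univ_succ]
  have h0 : matA (m+1) s g i 0 * (matA (m+1) s g)ᵀ 0 j
      = if i.val = 0 ∧ j.val = 0 then 1 else 0 := by
    simp only [transpose_apply]
    unfold matA
    simp only [Matrix.of_apply, Fin.val_zero]
    by_cases hi : i.val = 0 <;> by_cases hj : j.val = 0 <;> simp [hi, hj]
  have hrest : ∑ k : Fin m, matA (m+1) s g i k.succ * (matA (m+1) s g)ᵀ k.succ j
      = if m ∣ (i.val + j.val) then (m : F) else 0 := by
    rw [← geom_aux (g ^ s) m hhord (i.val + j.val),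
      ← Fin.sum_univ_eq_sum_range (fun t => (g ^ s) ^ ((i.val + j.val) * t)) m]
    apply Finset.sum_congr rfl
    intro k _
    rw [transpose_apply, key i k.succ (by simp [Fin.val_succ]),
      key j k.succ (by simp [Fin.val_succ]), ← pow_add]
    congr 1
    simp only [Fin.val_succ, Nat.add_sub_cancel]
    ring
  rw [h0, hrest, Matrix.of_apply]
  have hi : i.val < m + 1 := i.isLt
  have hj : j.val < m + 1 := j.isLt
  by_cases h1 : i.val = 0 ∧ j.val = 0
  · have hd : m ∣ i.val + j.val := by
      obtain ⟨e1, e2⟩ := h1; simp [e1, e2]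
    rw [if_pos h1, if_pos hd, if_pos h1]
    push_cast; ring
  · rw [if_neg h1, if_neg h1]
    by_cases hd : m ∣ (i.val + j.val)
    · have halt : i.val + j.val = m ∨ (i.val = m ∧ j.val = m) := by
        rcases hd with ⟨c, hc⟩
        have hc2 : c ≤ 2 := by
          by_contra hcc
          have := Nat.mul_le_mul_left m (show 3 ≤ c by omega)
          omega
        interval_cases c <;> omega
      rw [if_pos hd]
      rcases halt with h2 | h2
      · rw [if_pos h2, zero_add]
      · rw [if_neg (show ¬ i.val + j.val = m by omega), if_pos h2, zero_add]
    · rw [if_neg hd, if_neg (show ¬ i.val + j.val = m from fun h => hd (by rw [h])),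
        if_neg (show ¬ (i.val = m ∧ j.val = m) from fun h => hd ⟨2, by omega⟩), add_zero]
end

section
/- Let q = p^e be an odd prime power with q - 1 = (N-1)s, N ≥ 3, s ≥ 2, and p ∤ N. With A the N×N matrix over F_q as above (first row all ones, row i = (0,1,g^{(i-1)s},…,g^{(N-2)(i-1)s}) for 2 ≤ i ≤ N-1, last row (0,1,…,1)), the matrix A·Aᵀ is invertible, and in fact there exists a unit lower triangular matrix L over F_q such that L·A·Aᵀ·Lᵀ is a τ-monomial matrix where τ fixes 1 and N and swaps i with N+1-i for 2 ≤ i ≤ N-1. -/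
/-!
Index the rows and columns by `0, …, n` with `n = N - 1`, and put `h = g ^ s`, an element of
order `n`. Off the first column, row `i` of `A` is the character `k ↦ h ^ (k * i)` of `ℤ/n`
(rows `0` and `n` both being trivial), so orthogonality of characters gives
`(A * Aᵀ) i j = [i = j = 0] + n * [n ∣ i + j]`. This is already monomial for the involution
fixing `0` and `n` and reversing the rest, except for the two entries `n` at `(0, n)` and `(n, 0)`.
The transvection adding `-n / (n + 1)` times row `0` to row `n` clears both, leaving
`n + 1` and `n / (n + 1)` on the fixed points. Both `n` and `n + 1 = N` are units of `F`:
`n` divides `q - 1`, which is `-1` in `F`, and `p ∤ N`.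
-/

open Matrix

open Finset in
theorem sum_range_pow_mul_eq_ite {R : Type*} [CommRing R] [IsDomain R] {h : R} {n : ℕ}
    (hh : orderOf h = n) (m : ℕ) :
    ∑ k ∈ range n, h ^ (k * m) = if n ∣ m then (n : R) else 0 := by
  simp_rw [mul_comm _ m, pow_mul]
  split_ifs with hnm
  · simp [orderOf_dvd_iff_pow_eq_one.mp (hh ▸ hnm)]
  · have hne : h ^ m ≠ 1 := fun h1 => hnm (hh ▸ orderOf_dvd_of_pow_eq_one h1)
    have hpow : (h ^ m) ^ n = 1 := by
      rw [← pow_mul, pow_mul', ← hh, pow_orderOf_eq_one, one_pow]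
    have := mul_neg_geom_sum (h ^ m) n
    rw [hpow, sub_self] at this
    exact (mul_eq_zero.mp this).resolve_left (sub_ne_zero.mpr hne.symm)

theorem Nat.dvd_add_iff_of_le {n a b : ℕ} (ha : a ≤ n) (hb : b ≤ n) :
    n ∣ a + b ↔ a + b = 0 ∨ a + b = n ∨ a + b = 2 * n := by
  constructor
  · rintro ⟨t, ht⟩
    rcases t with _ | _ | _ | t
    · omega
    · omega
    · omega
    · have : 3 * n ≤ a + b := ht ▸ by nlinarith
      omega
  · rintro (h | h | h) <;> rw [h] <;> simp

theorem natCast_ne_zero_of_coprime_card {F : Type*} [Field F] [Fintype F] {N : ℕ}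
    (h : N.Coprime (Fintype.card F)) : (N : F) ≠ 0 := fun hN =>
  CharP.ringChar_ne_one <| Nat.eq_one_of_dvd_coprimes h ((ringChar.spec F N).mp hN)
    ((ringChar.spec F _).mp (FiniteField.cast_card_eq_zero F))

theorem natCast_mul_natCast_eq_neg_one {F : Type*} [Field F] [Fintype F] {n s : ℕ}
    (h : Fintype.card F - 1 = n * s) : (n : F) * s = -1 := by
  rw [← Nat.cast_mul, ← h, Nat.cast_sub Fintype.card_pos, FiniteField.cast_card_eq_zero]
  simp

theorem transpose_transvection {n R : Type*} [DecidableEq n] [CommRing R] (a b : n) (c : R) :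
    (transvection a b c)ᵀ = transvection b a c := by
  simp [transvection, transpose_add]

theorem transvection_apply_of_not_and {n R : Type*} [DecidableEq n] [CommRing R] {a b i j : n}
    (h : ¬(i = a ∧ j = b)) (c : R) : transvection a b c i j = (1 : Matrix n n R) i j := by
  rw [transvection, Matrix.add_apply,
    single_apply_of_ne (h := fun h' => h ⟨h'.1.symm, h'.2.symm⟩), add_zero]

theorem transvection_mul_mul_transpose_apply {n R : Type*} [Fintype n] [DecidableEq n]
    [CommRing R] (a b : n) (c : R) (B : Matrix n n R) (i j : n) :
    (transvection a b c * B * (transvection a b c)ᵀ) i j =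
      B i j + (if i = a then c * B b j else 0) + (if j = a then c * B i b else 0) +
        (if i = a ∧ j = a then c ^ 2 * B b b else 0) := by
  rw [transpose_transvection]
  have hl : ∀ (M : Matrix n n R) i j,
      (transvection a b c * M) i j = M i j + if i = a then c * M b j else 0 := by
    intro M i j
    by_cases hi : i = a <;> simp [hi]
  have hr : ∀ (M : Matrix n n R) i j,
      (M * transvection b a c) i j = M i j + if j = a then c * M i b else 0 := by
    intro M i j
    by_cases hj : j = a <;> simp [hj]
  rw [hr, hl, hl]
  split_ifs <;> simp_all
  ring

theorem isUnit_of_ne_zero_iff_eq {ι K : Type*} [Fintype ι] [DecidableEq ι] [Field K]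
    {M : Matrix ι ι K} {τ : ι → ι} (hτ : τ.Surjective)
    (hM : ∀ i j, M i j ≠ 0 ↔ j = τ i) : IsUnit M := by
  rw [isUnit_iff_isUnit_det, isUnit_iff_ne_zero]
  intro hdet
  obtain ⟨v, hv, hMv⟩ := exists_mulVec_eq_zero_iff.mpr hdet
  refine hv (funext fun j => ?_)
  obtain ⟨i, rfl⟩ := hτ j
  have hrow : M i (τ i) * v (τ i) = 0 := by
    have := congrFun hMv i
    rwa [mulVec, dotProduct, Finset.sum_eq_single (τ i)] at this
    · intro k _ hk
      rw [not_ne_iff.mp (mt (hM i k).mp hk), zero_mul]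
    · simp
  exact (mul_eq_zero.mp hrow).resolve_left ((hM i _).mpr rfl)

def revInterior (n : ℕ) (i : Fin (n + 1)) : Fin (n + 1) :=
  if i = 0 ∨ i = Fin.last n then i else i.rev

theorem revInterior_involutive (n : ℕ) : Function.Involutive (revInterior n) := by
  intro i
  by_cases hi : i = 0 ∨ i = Fin.last n
  · simp [revInterior, hi]
  · have : ¬ (i.rev = 0 ∨ i.rev = Fin.last n) := by
      simpa [Fin.rev_eq_iff, or_comm] using hi
    simp [revInterior, hi, this]

theorem eq_revInterior_iff {n : ℕ} (i j : Fin (n + 1)) :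
    j = revInterior n i ↔
      if (i : ℕ) = 0 ∨ (i : ℕ) = n then j = i else (i : ℕ) + j = n := by
  simp only [revInterior, Fin.ext_iff, Fin.val_zero, Fin.val_last]
  split_ifs
  · rfl
  · rw [Fin.val_rev]
    omega

section matA

variable {F : Type*} [Field F] {n s : ℕ} {g : F}

theorem matA_apply_zero_right (i : Fin (n + 1)) :
    matA (n + 1) s g i 0 = if i = 0 then 1 else 0 := by
  by_cases hi : i = 0 <;> simp [matA, hi]

theorem matA_apply_succ (hg : (g ^ s) ^ n = 1) (i : Fin (n + 1)) (k : Fin n) :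
    matA (n + 1) s g i k.succ = (g ^ s) ^ (k * i : ℕ) := by
  by_cases hi0 : i = 0
  · simp [matA, hi0]
  by_cases hin : (i : ℕ) = n
  · simp [matA, hi0, hin, pow_mul', hg]
  · simp [matA, hi0, hin, ← pow_mul]
    ring

theorem matA_mul_transpose_apply (hg : orderOf (g ^ s) = n) (i j : Fin (n + 1)) :
    (matA (n + 1) s g * (matA (n + 1) s g)ᵀ) i j =
      (if i = 0 ∧ j = 0 then 1 else 0) + if n ∣ (i + j : ℕ) then (n : F) else 0 := by
  have hpow : (g ^ s) ^ n = 1 := hg ▸ pow_orderOf_eq_one _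
  rw [mul_apply, Fin.sum_univ_succ, ← sum_range_pow_mul_eq_ite hg, ← Fin.sum_univ_eq_sum_range]
  simp only [transpose_apply, matA_apply_zero_right, matA_apply_succ hpow, ← pow_add, ← mul_add]
  congr 1
  by_cases hi : i = 0 <;> by_cases hj : j = 0 <;> simp [hi, hj]

theorem transvection_conj_matA_mul_transpose_apply (hg : orderOf (g ^ s) = n)
    (hN : (n : F) + 1 ≠ 0) (i j : Fin (n + 1)) :
    (transvection (Fin.last n) 0 (-n / (n + 1) : F) * (matA (n + 1) s g * (matA (n + 1) s g)ᵀ) *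
        (transvection (Fin.last n) 0 (-n / (n + 1) : F))ᵀ) i j =
      if j = revInterior n i then
        (if i = 0 then (n : F) + 1 else if i = Fin.last n then n / (n + 1) else n)
      else 0 := by
  have hB (a b : Fin (n + 1)) : (matA (n + 1) s g * (matA (n + 1) s g)ᵀ) a b =
      (if (a : ℕ) = 0 ∧ (b : ℕ) = 0 then 1 else 0) +
        if (a : ℕ) + b = 0 ∨ (a : ℕ) + b = n ∨ (a : ℕ) + b = 2 * n then (n : F)
        else 0 := by
    simp only [matA_mul_transpose_apply hg, Nat.dvd_add_iff_of_le a.is_le b.is_le, Fin.ext_iff,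
      Fin.val_zero]
  simp only [transvection_mul_mul_transpose_apply, hB, revInterior, Fin.ext_iff,
    apply_ite Fin.val, Fin.val_last, Fin.val_zero, Fin.val_rev]
  have := i.is_le
  have := j.is_le
  have hN' : 1 + (n : F) ≠ 0 := by rwa [add_comm]
  rcases Nat.eq_zero_or_pos n with rfl | hn
  · simp_all
  by_cases hi0 : (i : ℕ) = 0 <;> by_cases hin : (i : ℕ) = n <;>
    by_cases hj0 : (j : ℕ) = 0 <;> by_cases hjn : (j : ℕ) = n <;>
    simp [hi0, hin, hj0, hjn, hn.ne, hn.ne'] <;>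
    (try split_ifs) <;> first | omega | ring1 | (field_simp; ring1)

theorem transvection_conj_matA_mul_transpose_ne_zero_iff (hg : orderOf (g ^ s) = n)
    (hn : (n : F) ≠ 0) (hN : (n : F) + 1 ≠ 0) (i j : Fin (n + 1)) :
    (transvection (Fin.last n) 0 (-n / (n + 1) : F) * (matA (n + 1) s g * (matA (n + 1) s g)ᵀ) *
        (transvection (Fin.last n) 0 (-n / (n + 1) : F))ᵀ) i j ≠ 0 ↔ j = revInterior n i := by
  rw [transvection_conj_matA_mul_transpose_apply hg hN]
  split_ifs <;> simp [*]

end matA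

theorem stmt_4_general (p e q N s : ℕ) (hp : p.Prime)
    (hq : q = p ^ e) (hNs : q - 1 = (N - 1) * s)
    (hpN : ¬ p ∣ N)
    {F : Type*} [Field F] [Fintype F] (hF : Fintype.card F = q)
    (g : F) (hg : orderOf g = q - 1) :
    IsUnit (matA N s g * (matA N s g)ᵀ) ∧
    ∃ L : Matrix (Fin N) (Fin N) F,
      (∀ i, L i i = 1) ∧ (∀ i j : Fin N, i < j → L i j = 0) ∧
      ∀ i j : Fin N, (L * (matA N s g * (matA N s g)ᵀ) * Lᵀ) i j ≠ 0 ↔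
        (if i.val = 0 ∨ i.val = N - 1 then j = i else i.val + j.val = N - 1) := by
  have hNF : (N : F) ≠ 0 := natCast_ne_zero_of_coprime_card <| by
    rw [hF, hq]
    exact ((hp.coprime_iff_not_dvd.mpr hpN).pow_left e).symm
  have hns : ((N - 1 : ℕ) : F) * s = -1 := natCast_mul_natCast_eq_neg_one (hF ▸ hNs)
  obtain ⟨n, rfl⟩ : ∃ n, N = n + 1 :=
    Nat.exists_eq_add_one.mpr (Nat.pos_of_ne_zero (by rintro rfl; simp at hNF))
  simp only [Nat.add_sub_cancel] at hns hNs ⊢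
  have hn : (n : F) ≠ 0 := left_ne_zero_of_mul (hns ▸ neg_ne_zero.mpr one_ne_zero)
  have hs0 : s ≠ 0 := by rintro rfl; simp at hns
  have hord : orderOf (g ^ s) = n := by
    rw [orderOf_pow' g hs0, hg, hNs, Nat.gcd_mul_left_left,
      Nat.mul_div_cancel _ (Nat.pos_of_ne_zero hs0)]
  have hlast : Fin.last n ≠ 0 := fun h => hn <| by
    rw [show n = 0 from congrArg Fin.val h, Nat.cast_zero]
  have hM := transvection_conj_matA_mul_transpose_ne_zero_iff hord hn (by exact_mod_cast hNF)
  refine ⟨?_, _, fun i => ?_, fun i j hij => ?_,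
    fun i j => (hM i j).trans (eq_revInterior_iff i j)⟩
  · have hunit := isUnit_of_ne_zero_iff_eq (revInterior_involutive n).surjective hM
    rwa [isUnit_iff_isUnit_det, det_mul, det_mul, det_transpose, det_transvection_of_ne _ _ hlast,
      one_mul, mul_one, ← isUnit_iff_isUnit_det] at hunit
  · rw [transvection_apply_of_not_and (fun h => hlast (h.1.symm.trans h.2)), one_apply_eq]
  · rw [transvection_apply_of_not_and (fun h => Fin.not_lt_zero _ (h.2 ▸ hij)),
      one_apply_ne hij.ne]

/-- if p ∤ N, then A·Aᵀ is invertible and there is a unit lower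
triangular L such that L·(A·Aᵀ)·Lᵀ is τ-monomial, where τ fixes the first and
last indices and swaps i with N+1-i (1-based) otherwise. -/
theorem stmt_4 (p e q N s : ℕ) (hp : p.Prime) (hodd : Odd p) (he : 0 < e)
    (hq : q = p ^ e) (hN : 3 ≤ N) (hs : 2 ≤ s) (hNs : q - 1 = (N - 1) * s)
    (hpN : ¬ p ∣ N)
    {F : Type*} [Field F] [Fintype F] (hF : Fintype.card F = q)
    (g : F) (hg : orderOf g = q - 1) :
    IsUnit (matA N s g * (matA N s g)ᵀ) ∧
    ∃ L : Matrix (Fin N) (Fin N) F,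
      (∀ i, L i i = 1) ∧ (∀ i j : Fin N, i < j → L i j = 0) ∧
      ∀ i j : Fin N, (L * (matA N s g * (matA N s g)ᵀ) * Lᵀ) i j ≠ 0 ↔
        (if i.val = 0 ∨ i.val = N - 1 then j = i else i.val + j.val = N - 1) :=
  stmt_4_general p e q N s hp hq hNs hpN hF g hg
end

section
/- If A ∈ F_q^{N×M} (N ≤ M) is non-singular by columns (NSC), then for every i ∈ [N] the code generated by the first i rows of A has minimum distance D_i(A) = M - i + 1. -/
/-- Minimum Hamming weight (minimum distance) of a set of vectors. -/
noncomputable def minWt {ι F : Type*} [Fintype ι] [Zero F] [DecidableEq F]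
    (C : Set (ι → F)) : ℕ :=
  sInf {w | ∃ x ∈ C, x ≠ 0 ∧ (Finset.univ.filter fun a => x a ≠ 0).card = w}

/-- if A ∈ F^{N×M} is non-singular by columns, then the code
generated by the first i rows of A has minimum distance M - i + 1. -/
theorem stmt_7 {F : Type*} [Field F] [DecidableEq F] (N M : ℕ) (hNM : N ≤ M)
    (A : Matrix (Fin N) (Fin M) F)
    (hNSC : ∀ (i : ℕ) (hi : 0 < i) (hiN : i ≤ N) (f : Fin i → Fin M),
      StrictMono f →
      (Matrix.of fun a b : Fin i =>
        A ⟨a.val, lt_of_lt_of_le a.isLt hiN⟩ (f b)).det ≠ 0) :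
    ∀ (i : ℕ), 0 < i → i ≤ N →
      minWt (Submodule.span F {v : Fin M → F | ∃ k : Fin N, k.val < i ∧ v = A k}
          : Set (Fin M → F)) = M - i + 1 := by
  intro i hi hiN
  have hiM : i ≤ M := hiN.trans hNM
  set g : Fin i → (Fin M → F) := fun a => A ⟨a.1, lt_of_lt_of_le a.2 hiN⟩ with hg
  have hset : {v : Fin M → F | ∃ k : Fin N, k.val < i ∧ v = A k} = Set.range g := by
    ext v
    constructor
    · rintro ⟨k, hk, rfl⟩
      exact ⟨⟨k.1, hk⟩, by simp [hg]⟩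
    · rintro ⟨a, rfl⟩
      exact ⟨⟨a.1, lt_of_lt_of_le a.2 hiN⟩, a.2, rfl⟩
  -- key: any nonzero combination has fewer than i zero coordinates
  have key : ∀ c : Fin i → F, (∑ a, c a • g a) ≠ 0 →
      (Finset.univ.filter fun b => (∑ a, c a • g a) b = 0).card < i := by
    intro c hxne
    by_contra hcard
    push_neg at hcard
    obtain ⟨s, hs_sub, hs_card⟩ :=
      Finset.exists_subset_card_eq hcard
    set f : Fin i → Fin M := fun b => (s.orderIsoOfFin hs_card b : Fin M) with hf'
    have hf : StrictMono f := fun a b h =>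
      Subtype.coe_lt_coe.mpr ((s.orderIsoOfFin hs_card).strictMono h)
    set B := Matrix.of fun a b : Fin i =>
      A ⟨a.val, lt_of_lt_of_le a.isLt hiN⟩ (f b) with hB'
    have hB : IsUnit B.det := isUnit_iff_ne_zero.mpr (hNSC i hi hiN f hf)
    have hvec : Matrix.vecMul c B = 0 := by
      funext b
      have hmem : f b ∈ s := by simp [hf']
      have hz : (∑ a, c a • g a) (f b) = 0 :=
        (Finset.mem_filter.mp (hs_sub hmem)).2
      calc Matrix.vecMul c B b = ∑ a, c a * B a b := by
            simp [Matrix.vecMul, dotProduct]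
        _ = (∑ a, c a • g a) (f b) := by
            simp [hB', hg, Finset.sum_apply]
        _ = 0 := hz
    have hc : c = 0 := by
      have h2 := congrArg (fun v => Matrix.vecMul v B⁻¹) hvec
      simpa [Matrix.vecMul_vecMul, Matrix.mul_nonsing_inv B hB] using h2
    exact hxne (by simp [hc])
  -- the weight set
  set S := {w | ∃ x ∈ (Submodule.span F {v : Fin M → F | ∃ k : Fin N, k.val < i ∧ v = A k}
      : Set (Fin M → F)), x ≠ 0 ∧ (Finset.univ.filter fun a => x a ≠ 0).card = w} with hS
  -- lower bound
  have hlb : ∀ w ∈ S, M - i + 1 ≤ w := by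
    rintro w ⟨x, hxmem, hxne, rfl⟩
    rw [hset] at hxmem
    obtain ⟨c, rfl⟩ := Submodule.mem_span_range_iff_exists_fun F |>.mp hxmem
    have hz := key c hxne
    have hsplit := Finset.card_filter_add_card_filter_not
      (s := Finset.univ) (p := fun b => (∑ a, c a • g a) b = 0)
    simp only [Finset.card_univ, Fintype.card_fin] at hsplit
    have : (Finset.univ.filter fun b => ¬ ((∑ a, c a • g a) b = 0)).card
        = (Finset.univ.filter fun b => (∑ a, c a • g a) b ≠ 0).card := rfl
    omega
  -- membership: construct a word of weight M - i + 1
  have hmem : M - i + 1 ∈ S := by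
    set f : Fin i → Fin M := Fin.castLE hiM with hf'
    have hf : StrictMono f := fun a b h => h
    set B := Matrix.of fun a b : Fin i =>
      A ⟨a.val, lt_of_lt_of_le a.isLt hiN⟩ (f b) with hB'
    have hB : IsUnit B.det := isUnit_iff_ne_zero.mpr (hNSC i hi hiN f hf)
    set lst : Fin i := ⟨i - 1, by omega⟩ with hlst
    set c : Fin i → F := Matrix.vecMul (Pi.single lst 1) B⁻¹ with hc'
    have hcB : Matrix.vecMul c B = Pi.single lst 1 := by
      rw [hc', Matrix.vecMul_vecMul, Matrix.nonsing_inv_mul B hB, Matrix.vecMul_one]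
    set x : Fin M → F := ∑ a, c a • g a with hx'
    have hxval : ∀ b : Fin i, x (f b) = (Pi.single lst 1 : Fin i → F) b := by
      intro b
      have h2 := congrFun hcB b
      calc x (f b) = ∑ a, c a * B a b := by
            simp [hx', hB', hg, Finset.sum_apply]
        _ = Matrix.vecMul c B b := by simp [Matrix.vecMul, dotProduct]
        _ = (Pi.single lst 1 : Fin i → F) b := h2
    have hxne : x ≠ 0 := by
      intro h
      have := hxval lst
      rw [h] at this
      simp at this
    have hxmem : x ∈ (Submodule.span F
        {v : Fin M → F | ∃ k : Fin N, k.val < i ∧ v = A k} : Set (Fin M → F)) := by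
      rw [hset]
      exact Submodule.sum_mem _ fun a _ =>
        Submodule.smul_mem _ _ (Submodule.subset_span ⟨a, rfl⟩)
    -- zeros count
    have hzlt := key c (hx' ▸ hxne)
    have hzub : i - 1 ≤ (Finset.univ.filter fun b => x b = 0).card := by
      have himg : (Finset.univ.filter fun b : Fin i => b ≠ lst).image f ⊆
          Finset.univ.filter fun b => x b = 0 := by
        intro m hm
        obtain ⟨b, hb, rfl⟩ := Finset.mem_image.mp hm
        have hbne : b ≠ lst := (Finset.mem_filter.mp hb).2
        simp only [Finset.mem_filter, Finset.mem_univ, true_and]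
        rw [hxval b, Pi.single_eq_of_ne hbne]
      have hcardimg : ((Finset.univ.filter fun b : Fin i => b ≠ lst).image f).card = i - 1 := by
        rw [Finset.card_image_of_injective _ hf.injective]
        rw [Finset.filter_ne', Finset.card_erase_of_mem (Finset.mem_univ _)]
        simp
      calc i - 1 = _ := hcardimg.symm
        _ ≤ _ := Finset.card_le_card himg
    have hzeq : (Finset.univ.filter fun b => x b = 0).card = i - 1 := by
      rw [hx'] at *
      omega
    refine ⟨x, hxmem, hxne, ?_⟩
    have hsplit := Finset.card_filter_add_card_filter_not
      (s := Finset.univ) (p := fun b => x b = 0)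
    simp only [Finset.card_univ, Fintype.card_fin] at hsplit
    have : (Finset.univ.filter fun b => ¬ (x b = 0)).card
        = (Finset.univ.filter fun b => x b ≠ 0).card := rfl
    omega
  rw [minWt]
  exact le_antisymm (Nat.sInf_le hmem) (le_csInf ⟨_, hmem⟩ hlb)
end

section
/- Let q ≥ 5 be a prime power, u, t positive integers, v a nonnegative integer with v ≤ u and u + v ≤ q - 2. Let ω₁,…,ω_t ∈ F_{q²} be primitive (q-1)-th roots of unity, and let C(u,v,t) be the linear code of length t(q-1) over F_{q²} whose parity-check matrix is block-diagonal with blocks A_i for i ∈ [t], where A_i has rows (1, ω_i^j, ω_i^{2j}, …, ω_i^{j(q-2)}) for j = 1,…,u, together with v additional global rows B = (B₁,…,B_t) where B_i has rows (1, ω_i^{u+j}, …, ω_i^{(u+j)(q-2)}) for j = 1,…,v. Then C(u,v,t) has dimension t(q-1) - tu - v and minimum distance exactly u + v + 1. -/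
open Matrix Finset

section Aux
variable {F : Type*} [Field F]

lemma det_pvan_ne_zero {s : ℕ} (y : Fin s → F) (hy : Function.Injective y)
    (hy0 : ∀ a, y a ≠ 0) :
    (Matrix.of fun a k : Fin s => y a ^ (k.val + 1)).det ≠ 0 := by
  have hEq : (Matrix.of fun a k : Fin s => y a ^ (k.val + 1))
      = Matrix.diagonal y * Matrix.vandermonde y := by
    ext a k
    simp [Matrix.mul_apply, Matrix.diagonal, Matrix.vandermonde, pow_succ, pow_succ',
      Finset.sum_ite_eq, mul_comm]
  rw [hEq, Matrix.det_mul, Matrix.det_diagonal, Matrix.det_vandermonde]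
  refine mul_ne_zero (Finset.prod_ne_zero_iff.2 fun a _ => hy0 a) ?_
  refine Finset.prod_ne_zero_iff.2 fun i _ => Finset.prod_ne_zero_iff.2 fun j hj => ?_
  exact sub_ne_zero.2 fun h => absurd (hy h) (Finset.mem_Ioi.1 hj).ne'

lemma mulVec_eq_zero_of_det {s : ℕ} {A : Matrix (Fin s) (Fin s) F} (hA : A.det ≠ 0)
    {x : Fin s → F} (hx : A.mulVec x = 0) : x = 0 := by
  have hu : IsUnit A := (Matrix.isUnit_iff_isUnit_det A).2 hA.isUnit
  exact Matrix.mulVec_injective_iff_isUnit.2 hu (by simpa [Matrix.mulVec_zero] using hx)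

lemma pow_inj_orderOf {w : F} {N a b : ℕ} (hN : orderOf w = N) (hw : w ≠ 0)
    (ha : a < N) (hb : b < N) (hab : w ^ a = w ^ b) : a = b := by
  wlog h : a ≤ b generalizing a b
  · exact (this hb ha hab.symm (le_of_not_ge h)).symm
  have h1 : w ^ a * w ^ (b - a) = w ^ a * 1 := by
    rw [mul_one, ← pow_add, hab]; congr 1; omega
  have h2 : w ^ (b - a) = 1 := mul_left_cancel₀ (pow_ne_zero a hw) h1
  have h3 : N ∣ (b - a) := hN ▸ orderOf_dvd_of_pow_eq_one h2
  rcases Nat.eq_zero_or_pos (b - a) with h4 | h4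
  · omega
  · exact absurd (Nat.le_of_dvd h4 h3) (by omega)

lemma keyS {ι : Type*} [DecidableEq ι] {k : ℕ} {S : Finset ι} (hS : S.card ≤ k)
    {y : ι → F} (hy : Set.InjOn y S) (hy0 : ∀ a ∈ S, y a ≠ 0) {x : ι → F}
    (h : ∀ j < k, ∑ a ∈ S, x a * y a ^ (j + 1) = 0) :
    ∀ a ∈ S, x a = 0 := by
  classical
  set s := S.card with hs
  let e : Fin s ≃ S := S.equivFin.symm
  have hsum : ∀ j : ℕ, ∑ i : Fin s, x (e i) * y (e i) ^ (j + 1)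
      = ∑ a ∈ S, x a * y a ^ (j + 1) := by
    intro j
    rw [← Finset.sum_coe_sort S (fun a => x a * y a ^ (j + 1))]
    exact Equiv.sum_comp e (fun a : S => x a * y a ^ (j + 1))
  have hinj : Function.Injective (fun i : Fin s => y (e i)) := by
    intro i1 i2 h12
    have := hy (e i1).2 (e i2).2 h12
    exact e.injective (Subtype.ext this)
  have hdet := det_pvan_ne_zero (fun i : Fin s => y (e i)) hinj (fun i => hy0 _ (e i).2)
  have hdetT : (Matrix.of fun a k : Fin s => y (e a) ^ (k.val + 1))ᵀ.det ≠ 0 := by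
    rwa [Matrix.det_transpose]
  have hmv : (Matrix.of fun a k : Fin s => y (e a) ^ (k.val + 1))ᵀ.mulVec
      (fun i => x (e i)) = 0 := by
    funext j
    have := h j.val (lt_of_lt_of_le j.isLt hS)
    rw [← hsum j.val] at this
    simpa [Matrix.mulVec, dotProduct, Matrix.transpose_apply, mul_comm] using this
  have hz := mulVec_eq_zero_of_det hdetT hmv
  intro a ha
  have : x (e (e.symm ⟨a, ha⟩)) = 0 := congrFun hz (e.symm ⟨a, ha⟩)
  simpa using this

lemma sum_castLE {M : Type*} [AddCommMonoid M] {K N : ℕ} (h : K ≤ N) (f : Fin N → M)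
    (hf : ∀ a : Fin N, K ≤ a.val → f a = 0) :
    ∑ a, f a = ∑ b : Fin K, f (Fin.castLE h b) := by
  classical
  let g : ℕ → M := fun n => if hn : n < N then f ⟨n, hn⟩ else 0
  have h1 : ∑ a, f a = ∑ n ∈ Finset.range N, g n := by
    rw [← Fin.sum_univ_eq_sum_range g N]
    refine Finset.sum_congr rfl fun a _ => ?_
    simp [g, a.isLt]
  have h2 : ∑ b : Fin K, f (Fin.castLE h b) = ∑ n ∈ Finset.range K, g n := by
    rw [← Fin.sum_univ_eq_sum_range g K]
    refine Finset.sum_congr rfl fun b _ => ?_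
    simp [g, lt_of_lt_of_le b.isLt h, Fin.castLE]
  rw [h1, h2]
  refine (Finset.sum_subset (Finset.range_subset_range.2 h) fun n hn hn' => ?_).symm
  simp only [Finset.mem_range] at hn hn'
  simp [g, hn, hf ⟨n, hn⟩ (le_of_not_gt hn')]

end Aux

/-- The parity-check matrix of the code C(u,v,t): block-diagonal Vandermonde
rows with exponents 1,…,u in each block (built from ω_i), together with v
global rows with exponents u+1,…,u+v. Columns are indexed by (block, position). -/
def parityH (q u v t : ℕ) {F : Type*} [Field F] (ω : Fin t → F) :
    Matrix ((Fin t × Fin u) ⊕ Fin v) (Fin t × Fin (q - 1)) F :=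
  fun r c =>
    match r with
    | Sum.inl (i, j) => if c.1 = i then ω i ^ ((j.val + 1) * c.2.val) else 0
    | Sum.inr j => ω c.1 ^ ((u + j.val + 1) * c.2.val)

section Main
variable {F : Type*} [Field F]

lemma omega_ne_zero {w : F} {N : ℕ} (hN : orderOf w = N) (hN0 : 0 < N) : w ≠ 0 := by
  intro h
  have h1 : w ^ N = 1 := hN ▸ pow_orderOf_eq_one w
  rw [h, zero_pow hN0.ne'] at h1
  exact zero_ne_one h1

lemma block_eq (q u v t : ℕ) (ω : Fin t → F)
    (x : Fin t × Fin (q - 1) → F)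
    (hx : (parityH q u v t ω).mulVecLin x = 0) (i : Fin t) (j : Fin u) :
    ∑ a : Fin (q-1), x (i, a) * (ω i ^ a.val) ^ (j.val + 1) = 0 := by
  have := congrFun hx (Sum.inl (i, j))
  simp [parityH, Matrix.mulVecLin_apply, Matrix.mulVec, dotProduct,
    Fintype.sum_prod_type, ite_mul, Finset.sum_ite_eq', ← pow_mul', mul_comm] at this
  rw [← this]
  refine Finset.sum_congr rfl fun a _ => ?_
  rw [← pow_mul]
  ring

lemma global_eq (q u v t : ℕ) (ω : Fin t → F)
    (x : Fin t × Fin (q - 1) → F)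
    (hx : (parityH q u v t ω).mulVecLin x = 0) (j : Fin v) :
    ∑ i : Fin t, ∑ a : Fin (q-1), x (i, a) * (ω i ^ a.val) ^ (u + j.val + 1) = 0 := by
  have := congrFun hx (Sum.inr j)
  simp [parityH, Matrix.mulVecLin_apply, Matrix.mulVec, dotProduct,
    Fintype.sum_prod_type] at this
  rw [← this]
  refine Finset.sum_congr rfl fun i _ => Finset.sum_congr rfl fun a _ => ?_
  rw [← pow_mul']
  ring

lemma lower_bound {q u v t : ℕ} [DecidableEq F]
    (hq5 : 5 ≤ q) (hu : 1 ≤ u) (hvu : v ≤ u) (huv : u + v ≤ q - 2)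
    (ω : Fin t → F) (hω : ∀ i, orderOf (ω i) = q - 1)
    (x : Fin t × Fin (q - 1) → F)
    (hx : (parityH q u v t ω).mulVecLin x = 0)
    (hwt : (Finset.univ.filter fun c => x c ≠ 0).card ≤ u + v) :
    x = 0 := by
  classical
  have hq1 : 0 < q - 1 := by omega
  have hω0 : ∀ i, ω i ≠ 0 := fun i => omega_ne_zero (hω i) hq1
  set Sb : Fin t → Finset (Fin (q-1)) :=
    fun i => Finset.univ.filter fun a => x (i, a) ≠ 0 with hSb
  have hinj : ∀ i : Fin t, Set.InjOn (fun a : Fin (q-1) => ω i ^ a.val) (Sb i) := by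
    intro i a _ b _ hab
    exact Fin.ext (pow_inj_orderOf (hω i) (hω0 i) a.isLt b.isLt hab)
  have hynz : ∀ i : Fin t, ∀ a ∈ Sb i, ω i ^ a.val ≠ 0 :=
    fun i a _ => pow_ne_zero _ (hω0 i)
  -- restrict sums to support
  have hrestrict : ∀ (i : Fin t) (e : ℕ),
      ∑ a ∈ Sb i, x (i, a) * (ω i ^ a.val) ^ e
        = ∑ a : Fin (q-1), x (i, a) * (ω i ^ a.val) ^ e := by
    intro i e
    refine Finset.sum_filter_of_ne fun a _ h => ?_
    intro h0; exact h (by rw [h0, zero_mul])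
  have claim1 : ∀ i : Fin t, (Sb i).card ≤ u → ∀ a, x (i, a) = 0 := by
    intro i hcard a
    by_cases ha : a ∈ Sb i
    · refine keyS (x := fun a => x (i, a)) hcard (hinj i) (hynz i) (fun j hj => ?_) a ha
      rw [hrestrict]
      exact block_eq q u v t ω x hx i ⟨j, hj⟩
    · simpa [hSb] using ha
  -- card count
  have hcardsum : ∑ i : Fin t, (Sb i).card ≤ u + v := by
    have h1 : (Finset.univ.filter fun c : Fin t × Fin (q-1) => x c ≠ 0).card
        = ∑ i : Fin t, (Sb i).card := by
      rw [Finset.card_eq_sum_card_fiberwise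
        (f := Prod.fst) (t := Finset.univ) (fun c _ => Finset.mem_univ _)]
      refine Finset.sum_congr rfl fun i _ => ?_
      have h2 : (Finset.univ.filter fun c : Fin t × Fin (q-1) => x c ≠ 0).filter
          (fun c => c.1 = i) = (Sb i).image (fun a => (i, a)) := by
        ext ⟨i', a⟩
        simp only [Finset.mem_filter, Finset.mem_image, Finset.mem_univ, true_and, hSb]
        constructor
        · rintro ⟨h3, rfl⟩; exact ⟨a, h3, rfl⟩
        · rintro ⟨b, h3, h4⟩
          injection h4 with h5 h6
          subst h5; subst h6; exact ⟨h3, rfl⟩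
      rw [h2, Finset.card_image_of_injective _
        (fun a b h => by simpa using congrArg Prod.snd h)]
    omega
  by_cases hall : ∀ i, (Sb i).card ≤ u
  · funext c; exact claim1 c.1 (hall c.1) c.2
  push_neg at hall
  obtain ⟨i₀, hi₀⟩ := hall
  have hothers : ∀ i, i ≠ i₀ → (Sb i).card ≤ u := by
    intro i hne
    by_contra hcon
    push_neg at hcon
    have h5 := Finset.sum_le_sum_of_subset
      (f := fun i => (Sb i).card) (Finset.subset_univ {i, i₀})
    rw [Finset.sum_pair hne] at h5
    have h5' : (Sb i).card + (Sb i₀).card ≤ ∑ i' : Fin t, (Sb i').card := h5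
    omega
  have hzero : ∀ i, i ≠ i₀ → ∀ a, x (i, a) = 0 := fun i hne => claim1 i (hothers i hne)
  have hglobal : ∀ j : Fin v,
      ∑ a : Fin (q-1), x (i₀, a) * (ω i₀ ^ a.val) ^ (u + j.val + 1) = 0 := by
    intro j
    have h6 := global_eq q u v t ω x hx j
    rwa [Fintype.sum_eq_single i₀ (fun i hne => by
      simp [hzero i hne])] at h6
  have hc0 : (Sb i₀).card ≤ u + v := by
    have h7 : (Sb i₀).card ≤ ∑ i : Fin t, (Sb i).card :=
      Finset.single_le_sum (f := fun i => (Sb i).card) (fun i _ => Nat.zero_le _)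
        (Finset.mem_univ i₀)
    omega
  have hkey : ∀ a ∈ Sb i₀, x (i₀, a) = 0 := by
    refine keyS (x := fun a => x (i₀, a)) hc0 (hinj i₀) (hynz i₀) (fun j hj => ?_)
    rw [hrestrict]
    by_cases hju : j < u
    · exact block_eq q u v t ω x hx i₀ ⟨j, hju⟩
    · have := hglobal ⟨j - u, by omega⟩
      simpa [Nat.add_sub_cancel' (le_of_not_gt hju),
        show u + (j - u) + 1 = j + 1 by omega] using this
  funext c
  obtain ⟨i, a⟩ := c
  by_cases hi : i = i₀
  · subst hi
    by_cases ha : a ∈ Sb i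
    · exact hkey a ha
    · simpa [hSb] using ha
  · exact hzero i hi a

lemma col_eq (q u v t : ℕ) (ω : Fin t → F)
    (c : (Fin t × Fin u) ⊕ Fin v → F)
    (hc : (parityH q u v t ω)ᵀ.mulVecLin c = 0) (i : Fin t) (a : Fin (q - 1)) :
    ∑ j : Fin u, c (Sum.inl (i, j)) * (ω i ^ a.val) ^ (j.val + 1)
      + ∑ j : Fin v, c (Sum.inr j) * (ω i ^ a.val) ^ (u + j.val + 1) = 0 := by
  have := congrFun hc (i, a)
  simp only [Matrix.mulVecLin_apply, Matrix.mulVec, dotProduct,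
    Matrix.transpose_apply, Pi.zero_apply, parityH, Fintype.sum_sum_type,
    Fintype.sum_prod_type, ite_mul, zero_mul, Finset.sum_ite_irrel,
    Finset.sum_const_zero, Finset.sum_ite_eq, Finset.mem_univ, if_true] at this
  rw [← this]
  congr 1
  · refine Finset.sum_congr rfl fun j _ => ?_
    rw [← pow_mul]; ring
  · refine Finset.sum_congr rfl fun j _ => ?_
    rw [← pow_mul]; ring

lemma rows_indep {q u v t : ℕ} (hq5 : 5 ≤ q) (huv : u + v ≤ q - 2) (ht : 1 ≤ t)
    (ω : Fin t → F) (hω : ∀ i, orderOf (ω i) = q - 1) :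
    Function.Injective (parityH q u v t ω)ᵀ.mulVecLin := by
  rw [← LinearMap.ker_eq_bot, LinearMap.ker_eq_bot']
  intro c hc
  have hq1 : 0 < q - 1 := by omega
  have hω0 : ∀ i, ω i ≠ 0 := fun i => omega_ne_zero (hω i) hq1
  have hle : u + v ≤ q - 1 := by omega
  have key : ∀ i : Fin t, ∀ k : Fin (u + v),
      (if h : k.val < u then c (Sum.inl (i, ⟨k.val, h⟩))
        else c (Sum.inr ⟨k.val - u, by omega⟩)) = 0 := by
    intro i
    set d : Fin (u + v) → F := fun k =>
      if h : k.val < u then c (Sum.inl (i, ⟨k.val, h⟩))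
      else c (Sum.inr ⟨k.val - u, by omega⟩) with hd
    have hmv : (Matrix.of fun a' k : Fin (u + v) => (ω i ^ a'.val) ^ (k.val + 1)).mulVec d
        = 0 := by
      funext a'
      have h1 := col_eq q u v t ω c hc i (Fin.castLE hle a')
      have h2 : ∑ k : Fin (u + v), (ω i ^ a'.val) ^ (k.val + 1) * d k
          = ∑ j : Fin u, c (Sum.inl (i, j)) * (ω i ^ a'.val) ^ (j.val + 1)
            + ∑ j : Fin v, c (Sum.inr j) * (ω i ^ a'.val) ^ (u + j.val + 1) := by
        rw [Fin.sum_univ_add (f := fun k : Fin (u + v) => (ω i ^ a'.val) ^ (k.val + 1) * d k)]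
        congr 1
        · refine Finset.sum_congr rfl fun j _ => ?_
          simp [hd, Fin.castAdd, j.isLt, mul_comm]
        · refine Finset.sum_congr rfl fun j _ => ?_
          have : ¬ (u + j.val < u) := by omega
          simp [hd, Fin.natAdd, this, mul_comm]
      simp only [Matrix.mulVec, dotProduct, Matrix.of_apply, Pi.zero_apply]
      rw [h2]
      simpa using h1
    have hdinj : Function.Injective (fun a' : Fin (u + v) => ω i ^ a'.val) := by
      intro a b hab
      exact Fin.ext (pow_inj_orderOf (hω i) (hω0 i) (by omega) (by omega) hab)
    have hdet := det_pvan_ne_zero (fun a' : Fin (u + v) => ω i ^ a'.val) hdinj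
      (fun a' => pow_ne_zero _ (hω0 i))
    have := mulVec_eq_zero_of_det hdet hmv
    intro k
    exact congrFun this k
  funext r
  cases r with
  | inl ij =>
    obtain ⟨i, j⟩ := ij
    have := key i ⟨j.val, by omega⟩
    simpa [j.isLt] using this
  | inr j =>
    have := key ⟨0, ht⟩ ⟨u + j.val, by omega⟩
    have h2 : ¬ (u + j.val < u) := by omega
    simpa [h2] using this

lemma rank_eq {q u v t : ℕ} (hq5 : 5 ≤ q) (huv : u + v ≤ q - 2) (ht : 1 ≤ t)
    (ω : Fin t → F) (hω : ∀ i, orderOf (ω i) = q - 1) :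
    (parityH q u v t ω).rank = t * u + v := by
  rw [← Matrix.rank_transpose, Matrix.rank,
    LinearMap.finrank_range_of_inj (rows_indep hq5 huv ht ω hω)]
  simp [Module.finrank_pi, mul_comm]

lemma dim_eq {q u v t : ℕ} (hq5 : 5 ≤ q) (huv : u + v ≤ q - 2) (ht : 1 ≤ t) (hvu : v ≤ u)
    (ω : Fin t → F) (hω : ∀ i, orderOf (ω i) = q - 1) :
    Module.finrank F (LinearMap.ker (parityH q u v t ω).mulVecLin)
      = t * (q - 1) - t * u - v := by
  have h1 := LinearMap.finrank_range_add_finrank_ker (parityH q u v t ω).mulVecLin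
  have h2 : Module.finrank F (LinearMap.range (parityH q u v t ω).mulVecLin)
      = t * u + v := rank_eq hq5 huv ht ω hω
  have h3 : Module.finrank F (Fin t × Fin (q - 1) → F) = t * (q - 1) := by
    simp [Module.finrank_pi, mul_comm]
  have h4 : t * u + v ≤ t * (q - 1) := by
    have : u + v ≤ q - 1 := by omega
    calc t * u + v ≤ t * u + t * v := by nlinarith
    _ = t * (u + v) := by ring
    _ ≤ t * (q - 1) := Nat.mul_le_mul_left t (by omega)
  rw [h3, h2] at h1
  omega

lemma mem_ker_iff (q u v t : ℕ) (ω : Fin t → F) (x : Fin t × Fin (q - 1) → F) :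
    (parityH q u v t ω).mulVecLin x = 0 ↔
      (∀ (i : Fin t) (j : Fin u),
        ∑ a : Fin (q-1), x (i, a) * (ω i ^ a.val) ^ (j.val + 1) = 0) ∧
      (∀ j : Fin v,
        ∑ i : Fin t, ∑ a : Fin (q-1), x (i, a) * (ω i ^ a.val) ^ (u + j.val + 1) = 0) := by
  constructor
  · exact fun h => ⟨block_eq q u v t ω x h, global_eq q u v t ω x h⟩
  · rintro ⟨h1, h2⟩
    funext r
    cases r with
    | inl ij =>
      obtain ⟨i, j⟩ := ij
      show ∑ c, parityH q u v t ω (Sum.inl (i, j)) c * x c = 0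
      simp only [parityH, Fintype.sum_prod_type, ite_mul, zero_mul,
        Finset.sum_ite_irrel, Finset.sum_const_zero, Finset.sum_ite_eq',
        Finset.mem_univ, if_true]
      rw [← h1 i j]
      refine Finset.sum_congr rfl fun a _ => ?_
      rw [← pow_mul]; ring
    | inr j =>
      show ∑ c, parityH q u v t ω (Sum.inr j) c * x c = 0
      simp only [parityH, Fintype.sum_prod_type]
      rw [← h2 j]
      refine Finset.sum_congr rfl fun i _ => Finset.sum_congr rfl fun a _ => ?_
      rw [← pow_mul]; ring

lemma upper_exists {q u v t : ℕ} [DecidableEq F] (hq5 : 5 ≤ q) (hu : 1 ≤ u) (ht : 1 ≤ t)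
    (huv : u + v ≤ q - 2) (ω : Fin t → F) (hω : ∀ i, orderOf (ω i) = q - 1) :
    ∃ x : Fin t × Fin (q - 1) → F, (parityH q u v t ω).mulVecLin x = 0 ∧ x ≠ 0 ∧
      (Finset.univ.filter fun c => x c ≠ 0).card ≤ u + v + 1 := by
  classical
  set i₀ : Fin t := ⟨0, ht⟩ with hi₀
  have hle : u + v + 1 ≤ q - 1 := by omega
  set B : Matrix (Fin (u + v)) (Fin (u + v + 1)) F :=
    Matrix.of fun k b => (ω i₀ ^ b.val) ^ (k.val + 1) with hB
  obtain ⟨y, hymem, hy0⟩ : ∃ y ∈ LinearMap.ker B.mulVecLin, y ≠ 0 := by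
    have hni : ¬ Function.Injective B.mulVecLin := by
      intro hinj
      have := LinearMap.finrank_le_finrank_of_injective hinj
      simp [Module.finrank_pi] at this
    rw [← LinearMap.ker_eq_bot] at hni
    exact Submodule.exists_mem_ne_zero_of_ne_bot hni
  have hBy : B.mulVec y = 0 := hymem
  set x : Fin t × Fin (q - 1) → F := fun c =>
    if h : c.1 = i₀ ∧ c.2.val < u + v + 1 then y ⟨c.2.val, h.2⟩ else 0 with hxdef
  have hxval : ∀ b : Fin (u + v + 1), x (i₀, Fin.castLE hle b) = y b := by
    intro b
    have hcond : (i₀, Fin.castLE hle b).1 = i₀ ∧ (Fin.castLE hle b).val < u + v + 1 :=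
      ⟨rfl, b.isLt⟩
    simp only [hxdef, dif_pos hcond]
    congr 1
  have hxout : ∀ (i : Fin t) (a : Fin (q - 1)), ¬(i = i₀ ∧ a.val < u + v + 1) →
      x (i, a) = 0 := by
    intro i a h
    simp only [hxdef, dif_neg h]
  have hblock : ∀ e : ℕ, e < u + v →
      ∑ a : Fin (q-1), x (i₀, a) * (ω i₀ ^ a.val) ^ (e + 1) = 0 := by
    intro e he
    rw [sum_castLE hle (fun a => x (i₀, a) * (ω i₀ ^ a.val) ^ (e + 1))
      (fun a ha => by show x (i₀, a) * _ = 0; rw [hxout i₀ a (by omega), zero_mul])]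
    have := congrFun hBy ⟨e, he⟩
    simp only [hB, Matrix.mulVec, dotProduct, Matrix.of_apply, Pi.zero_apply] at this
    rw [← this]
    refine Finset.sum_congr rfl fun b _ => ?_
    rw [hxval b]
    simp [Fin.castLE, mul_comm]
  refine ⟨x, ?_, ?_, ?_⟩
  · rw [mem_ker_iff]
    constructor
    · intro i j
      by_cases hi : i = i₀
      · subst hi
        exact hblock j.val (by omega)
      · exact Finset.sum_eq_zero fun a _ => by
          rw [hxout i a (fun h => hi h.1), zero_mul]
    · intro j
      rw [Fintype.sum_eq_single i₀ (fun i hi => Finset.sum_eq_zero fun a _ => by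
        rw [hxout i a (fun h => hi h.1), zero_mul])]
      exact hblock (u + j.val) (by omega)
  · obtain ⟨b, hb⟩ := Function.ne_iff.1 hy0
    intro hx0
    apply hb
    rw [← hxval b, hx0]
    rfl
  · have hsub : (Finset.univ.filter fun c => x c ≠ 0) ⊆
        Finset.univ.image (fun b : Fin (u + v + 1) => (i₀, Fin.castLE hle b)) := by
      intro c hc
      simp only [Finset.mem_filter, Finset.mem_univ, true_and] at hc
      obtain ⟨i, a⟩ := c
      by_cases h : i = i₀ ∧ a.val < u + v + 1
      · refine Finset.mem_image.2 ⟨⟨a.val, h.2⟩, Finset.mem_univ _, ?_⟩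
        exact Prod.ext h.1.symm (Fin.ext rfl)
      · exact absurd (hxout i a h) hc
    exact le_trans (Finset.card_le_card hsub) (le_trans Finset.card_image_le (by simp))

end Main

/-- the code C(u,v,t) over F_{q²} has dimension t(q-1) - tu - v and
minimum distance exactly u + v + 1. -/
theorem stmt_9 (p e q u v t : ℕ) (hp : p.Prime) (he : 0 < e) (hq : q = p ^ e)
    (hq5 : 5 ≤ q) (hu : 1 ≤ u) (ht : 1 ≤ t) (hvu : v ≤ u) (huv : u + v ≤ q - 2)
    {F : Type*} [Field F] [Fintype F] [DecidableEq F]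
    (hF : Fintype.card F = q ^ 2)
    (ω : Fin t → F) (hω : ∀ i, orderOf (ω i) = q - 1) :
    Module.finrank F (LinearMap.ker (parityH q u v t ω).mulVecLin)
        = t * (q - 1) - t * u - v ∧
    minWt ((LinearMap.ker (parityH q u v t ω).mulVecLin : Submodule F _)
        : Set (Fin t × Fin (q - 1) → F)) = u + v + 1 := by
  constructor
  · exact dim_eq hq5 huv ht hvu ω hω
  · obtain ⟨x, hxker, hx0, hwtle⟩ := upper_exists hq5 hu ht huv ω hω
    have hlb : ∀ z : Fin t × Fin (q - 1) → F, (parityH q u v t ω).mulVecLin z = 0 →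
        z ≠ 0 → u + v + 1 ≤ (Finset.univ.filter fun c => z c ≠ 0).card := by
      intro z hz hz0
      by_contra h
      push_neg at h
      exact hz0 (lower_bound hq5 hu hvu huv ω hω z hz (by omega))
    have hwt : (Finset.univ.filter fun c => x c ≠ 0).card = u + v + 1 :=
      le_antisymm hwtle (hlb x hxker hx0)
    have hmem : (u + v + 1) ∈ {w | ∃ z ∈ ((LinearMap.ker (parityH q u v t ω).mulVecLin :
        Submodule F _) : Set (Fin t × Fin (q - 1) → F)), z ≠ 0 ∧
        (Finset.univ.filter fun a => z a ≠ 0).card = w} :=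
      ⟨x, by simpa [LinearMap.mem_ker] using hxker, hx0, hwt⟩
    unfold minWt
    refine le_antisymm (Nat.sInf_le hmem) ?_
    obtain ⟨z, hzmem, hz0, hzw⟩ := Nat.sInf_mem (⟨u + v + 1, hmem⟩ : Set.Nonempty _)
    rw [← hzw]
    exact hlb z (by simpa [LinearMap.mem_ker] using hzmem) hz0
end

section
/- With the code C(u,v,t) over F_{q²} defined via the block parity-check matrix with per-block Vandermonde rows of exponents 1,…,u and global rows of exponents u+1,…,u+v (in primitive (q-1)-th roots of unity ω₁,…,ω_t), if 2u + v ≤ q - 2 then C(u,0,t)^{⊥_H} ⊆ C(u,v,t), i.e., every row of the parity-check matrix of C(u,v,t) is Hermitian-orthogonal to every row of the parity-check matrix of C(u,0,t). -/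
/-! Write `H = parityH q u v t ω` and `H₀ = parityH q u 0 t ω`. The map `σ a = a ^ q` is an
involutive automorphism of `F_{q²}`, so `x` is Hermitian-orthogonal to `ker H₀` iff `σ ∘ x` is
orthogonal to `ker H₀`, i.e. lies in the row space of `H₀`. Then `x` is a combination of the
`σ`-conjugated rows of `H₀`, and it suffices that `H` times the transpose of `H₀.map σ` vanishes.
Its entries are character sums `∑ₐ ω^((s + q j') a)` over the `(q-1)`-th roots of unity, which
vanish because `s + q j' ≡ s + j' (mod q - 1)` and `0 < s + j' ≤ 2u + v < q - 1`. -/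

open Matrix

theorem Matrix.exists_vecMul_eq_of_dotProduct_ker_eq_zero {K ι κ : Type*} [Field K]
    [Fintype ι] [DecidableEq ι] [Fintype κ] [DecidableEq κ] (M : Matrix ι κ K) {z : κ → K}
    (hz : ∀ y ∈ LinearMap.ker M.mulVecLin, z ⬝ᵥ y = 0) :
    ∃ c : ι → K, c ᵥ* M = z := by
  have hg : dotProductEquiv K κ z ∈ (LinearMap.ker M.mulVecLin).dualAnnihilator :=
    (Submodule.mem_dualAnnihilator _).mpr hz
  rw [← LinearMap.range_dualMap_eq_dualAnnihilator_ker] at hg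
  obtain ⟨φ, hφ⟩ := hg
  refine ⟨(dotProductEquiv K ι).symm φ, (dotProductEquiv K κ).injective ?_⟩
  refine LinearMap.ext fun y => ?_
  have := LinearMap.congr_fun hφ y
  rw [LinearMap.dualMap_apply, Matrix.mulVecLin_apply, dotProductEquiv_apply_apply,
    ← (dotProductEquiv K ι).apply_symm_apply φ, dotProductEquiv_apply_apply] at this
  rw [dotProductEquiv_apply_apply, dotProductEquiv_apply_apply, ← this, dotProduct_mulVec]

theorem Matrix.mem_ker_mulVecLin_of_sesq_orthogonal_ker {K ι ι' κ : Type*} [Field K]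
    [Fintype ι] [DecidableEq ι] [Fintype κ] [DecidableEq κ] (σ : K →+* K)
    (hσ : Function.Involutive σ) {A : Matrix ι' κ K} {B : Matrix ι κ K}
    (hAB : A * (B.map σ)ᵀ = 0) {x : κ → K}
    (hx : ∀ y ∈ LinearMap.ker B.mulVecLin, x ⬝ᵥ (σ ∘ y) = 0) :
    x ∈ LinearMap.ker A.mulVecLin := by
  obtain ⟨c, hc⟩ : ∃ c : ι → K, c ᵥ* B = σ ∘ x := by
    refine B.exists_vecMul_eq_of_dotProduct_ker_eq_zero fun y hy => ?_
    have := congrArg σ (hx y hy)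
    rwa [RingHom.map_dotProduct, map_zero, ← Function.comp_assoc, hσ.comp_self,
      Function.id_comp] at this
  have hx' : x = (B.map σ)ᵀ *ᵥ (σ ∘ c) := by
    funext k
    rw [mulVec_transpose, ← RingHom.map_vecMul, hc, Function.comp_apply, hσ]
  rw [LinearMap.mem_ker, mulVecLin_apply, hx', mulVec_mulVec, hAB, zero_mulVec]

theorem FiniteField.exists_involutive_ringHom_eq_pow {F : Type*} [Field F] [Fintype F]
    {p e q : ℕ} (hp : p.Prime) (hq : q = p ^ e) (hF : Fintype.card F = q ^ 2) :
    ∃ σ : F →+* F, Function.Involutive σ ∧ ∀ a, σ a = a ^ q := by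
  have := Fact.mk hp
  have : CharP F p :=
    charP_of_card_eq_prime_pow (f := 2 * e) (by rw [hF, hq, ← pow_mul, mul_comm])
  refine ⟨iterateFrobenius F p e, fun a => ?_, fun a => by rw [iterateFrobenius_def, hq]⟩
  rw [iterateFrobenius_def, iterateFrobenius_def, ← hq, ← pow_mul, ← sq, ← hF,
    FiniteField.pow_card]

theorem sum_pow_mul_eq_zero_of_not_dvd {F : Type*} [Field F] {z : F} {n m : ℕ}
    (hz : orderOf z = n) (hm : ¬ n ∣ m) : ∑ a : Fin n, z ^ (m * a) = 0 := by
  have hzm : z ^ m ≠ 1 := fun h => hm (hz ▸ orderOf_dvd_of_pow_eq_one h)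
  have hzmn : (z ^ m) ^ n = 1 := by
    rw [← pow_mul, mul_comm, pow_mul, ← hz, pow_orderOf_eq_one, one_pow]
  simp only [pow_mul, Fin.sum_univ_eq_sum_range fun a => (z ^ m) ^ a]
  rw [geom_sum_eq hzm, hzmn, sub_self, zero_div]

theorem Nat.not_sub_one_dvd_add_mul {q c₁ c₂ : ℕ} (hpos : 0 < c₁ + c₂)
    (hlt : c₁ + c₂ < q - 1) : ¬ q - 1 ∣ c₁ + q * c₂ := by
  obtain ⟨k, rfl⟩ : ∃ k, q = k + 1 := ⟨q - 1, by omega⟩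
  rw [Nat.add_sub_cancel] at hlt ⊢
  have hsplit : c₁ + (k + 1) * c₂ = c₁ + c₂ + k * c₂ := by ring
  rw [hsplit, Nat.dvd_add_left (dvd_mul_right _ _)]
  exact fun h => absurd (Nat.le_of_dvd hpos h) (by omega)

theorem parityH_apply_eq_zero_or_pow {q u v t : ℕ} {F : Type*} [Field F] (ω : Fin t → F)
    (r : (Fin t × Fin u) ⊕ Fin v) (i : Fin t) :
    (∀ a, parityH q u v t ω r (i, a) = 0) ∨
      ∃ s, 0 < s ∧ s ≤ u + v ∧ ∀ a, parityH q u v t ω r (i, a) = ω i ^ (s * a) := by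
  rcases r with ⟨i', j⟩ | j
  · by_cases hi : i = i'
    · subst hi
      exact Or.inr ⟨j + 1, by omega, by omega, fun a => if_pos rfl⟩
    · exact Or.inl fun a => if_neg hi
  · exact Or.inr ⟨u + j + 1, by omega, by omega, fun a => rfl⟩

theorem parityH_mul_map_pow_transpose_eq_zero {q u v t : ℕ} {F : Type*} [Field F]
    (ω : Fin t → F) (hω : ∀ i, orderOf (ω i) = q - 1) (huv : 2 * u + v ≤ q - 2) :
    parityH q u v t ω * ((parityH q u 0 t ω).map (· ^ q))ᵀ = 0 := by
  ext r' r
  rcases r with ⟨i, j'⟩ | r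
  swap
  · exact r.elim0
  rw [mul_apply, Matrix.zero_apply, Fintype.sum_prod_type, Finset.sum_eq_single i]
  · rcases parityH_apply_eq_zero_or_pow (q := q) ω r' i with h0 | ⟨s, hs0, hs, hsa⟩
    · simp only [h0, zero_mul, Finset.sum_const_zero]
    calc _ = ∑ a : Fin (q - 1), ω i ^ ((s + q * (j' + 1)) * a) := by
          refine Finset.sum_congr rfl fun a _ => ?_
          rw [hsa, transpose_apply, map_apply]
          simp only [parityH, if_pos]
          ring
      _ = 0 := sum_pow_mul_eq_zero_of_not_dvd (hω i)
          (Nat.not_sub_one_dvd_add_mul (by omega) (by omega))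
  · intro k _ hk
    refine Finset.sum_eq_zero fun a _ => ?_
    have hq : q ≠ 0 := by have := a.isLt; omega
    simp only [transpose_apply, map_apply, parityH, if_neg hk, zero_pow hq, mul_zero]
  · simp

theorem stmt_10_general (p e q u v t : ℕ) (hp : p.Prime) (hq : q = p ^ e)
    (huv : 2 * u + v ≤ q - 2)
    {F : Type*} [Field F] [Fintype F]
    (hF : Fintype.card F = q ^ 2)
    (ω : Fin t → F) (hω : ∀ i, orderOf (ω i) = q - 1) :
    ∀ x : Fin t × Fin (q - 1) → F,
      (∀ y ∈ LinearMap.ker (parityH q u 0 t ω).mulVecLin,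
        ∑ c, x c * (y c) ^ q = 0) →
      x ∈ LinearMap.ker (parityH q u v t ω).mulVecLin := by
  intro x hx
  obtain ⟨σ, hσ, hσq⟩ := FiniteField.exists_involutive_ringHom_eq_pow hp hq hF
  have hσ_eq : ⇑σ = (· ^ q) := funext hσq
  have horth : parityH q u v t ω * ((parityH q u 0 t ω).map σ)ᵀ = 0 := by
    simpa only [hσ_eq] using parityH_mul_map_pow_transpose_eq_zero ω hω huv
  exact mem_ker_mulVecLin_of_sesq_orthogonal_ker σ hσ horth fun y hy => by
    rw [hσ_eq]; exact hx y hy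

/-- if 2u + v ≤ q - 2, then the Hermitian dual of C(u,0,t) is
contained in C(u,v,t). -/
theorem stmt_10 (p e q u v t : ℕ) (hp : p.Prime) (he : 0 < e) (hq : q = p ^ e)
    (hq5 : 5 ≤ q) (hu : 1 ≤ u) (ht : 1 ≤ t) (hvu : v ≤ u)
    (huv : 2 * u + v ≤ q - 2)
    {F : Type*} [Field F] [Fintype F] [DecidableEq F]
    (hF : Fintype.card F = q ^ 2)
    (ω : Fin t → F) (hω : ∀ i, orderOf (ω i) = q - 1) :
    ∀ x : Fin t × Fin (q - 1) → F,
      (∀ y ∈ LinearMap.ker (parityH q u 0 t ω).mulVecLin,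
        ∑ c, x c * (y c) ^ q = 0) →
      x ∈ LinearMap.ker (parityH q u v t ω).mulVecLin :=
  stmt_10_general p e q u v t hp hq huv hF ω hω
end

section
/- Let A be an N×N invertible matrix over a field, and let C₁ ⊇ C₂ ⊇ ⋯ ⊇ C_N be nested linear codes of length n, where C_i is an optimal (r,δ)-LRC with parameters [n, k_i, d_i]. Suppose D_{N-1}(A) = 1, where D_{N-1}(A) is the minimum distance of the code generated by the first N-1 rows of A. If the matrix-product code C(A) = [C₁,…,C_N]·A is an optimal (r,δ)-LRC, then C₁ = C₂ = ⋯ = C_N, d₁ = ⋯ = d_N = δ, and ⌈Nk₁/r⌉ = N⌈k₁/r⌉. -/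
/-- (r,δ)-locality of a code. -/
def IsLRC {ι F : Type*} [Fintype ι] [DecidableEq ι] [Zero F] [DecidableEq F]
    (C : Set (ι → F)) (r δ : ℕ) : Prop :=
  ∀ i : ι, ∃ S : Finset ι, i ∈ S ∧ S.card ≤ r + δ - 1 ∧
    ∀ x ∈ C, (∃ j ∈ S, x j ≠ 0) → δ ≤ (S.filter fun j => x j ≠ 0).card

/-- The matrix-product code [C₁,…,C_N]·A. -/
def MPcode {F : Type*} [Field F] {N M n : ℕ} (A : Matrix (Fin N) (Fin M) F)
    (C : Fin N → Submodule F (Fin n → F)) : Submodule F (Fin M × Fin n → F) :=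
  Submodule.span F {x | ∃ c : Fin N → Fin n → F,
    (∀ i, c i ∈ C i) ∧ x = fun p => ∑ i, A i p.1 * c i p.2}

open Finset

/-- Hamming weight. -/
noncomputable def wtF {ι F : Type*} [Fintype ι] [Zero F] [DecidableEq F] (x : ι → F) : ℕ :=
  (Finset.univ.filter fun a => x a ≠ 0).card

lemma wtF_eq_zero_iff {ι F : Type*} [Fintype ι] [Zero F] [DecidableEq F] (x : ι → F) :
    wtF x = 0 ↔ x = 0 := by
  simp [wtF, Finset.card_eq_zero, Finset.filter_eq_empty_iff, funext_iff]

lemma minWt_le {ι F : Type*} [Fintype ι] [Zero F] [DecidableEq F]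
    {C : Set (ι → F)} {x : ι → F} (hx : x ∈ C) (h0 : x ≠ 0) : minWt C ≤ wtF x :=
  Nat.sInf_le ⟨x, hx, h0, rfl⟩

lemma exists_minWt {ι F : Type*} [Fintype ι] [Zero F] [DecidableEq F]
    {C : Set (ι → F)} (h : ∃ x ∈ C, x ≠ 0) : ∃ x ∈ C, x ≠ 0 ∧ wtF x = minWt C := by
  obtain ⟨x, hx, h0⟩ := h
  have hne : {w | ∃ x ∈ C, x ≠ 0 ∧ (Finset.univ.filter fun a => x a ≠ 0).card = w}.Nonempty :=
    ⟨wtF x, x, hx, h0, rfl⟩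
  obtain ⟨y, hy, hy0, hyw⟩ := Nat.sInf_mem hne
  exact ⟨y, hy, hy0, hyw⟩

lemma IsLRC.le_wt {ι F : Type*} [Fintype ι] [DecidableEq ι] [Zero F] [DecidableEq F]
    {C : Set (ι → F)} {r δ : ℕ} (h : IsLRC C r δ) {x : ι → F} (hx : x ∈ C) (h0 : x ≠ 0) :
    δ ≤ wtF x := by
  obtain ⟨j, hj⟩ := Function.ne_iff.mp h0
  simp only [Pi.zero_apply] at hj
  obtain ⟨S, hjS, _, hS⟩ := h j
  calc δ ≤ (S.filter fun j => x j ≠ 0).card := hS x hx ⟨j, hjS, hj⟩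
    _ ≤ wtF x := by
        apply Finset.card_le_card
        intro a ha
        simp only [Finset.mem_filter] at ha ⊢
        exact ⟨Finset.mem_univ a, ha.2⟩

lemma wtF_prod {ι κ F : Type*} [Fintype ι] [Fintype κ] [Field F] [DecidableEq F]
    (v : ι → F) (c : κ → F) :
    wtF (fun p : ι × κ => v p.1 * c p.2) = wtF v * wtF c := by
  unfold wtF
  rw [← Finset.card_product]
  congr 1
  ext p
  simp [Finset.mem_filter, mul_ne_zero_iff, and_and_and_comm]

lemma ceil_sum_le {ι : Type*} (s : Finset ι) (f : ι → ℕ) (r : ℕ) :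
    ⌈((∑ i ∈ s, f i : ℕ) : ℚ) / (r : ℚ)⌉ ≤ ∑ i ∈ s, ⌈((f i : ℕ) : ℚ) / (r : ℚ)⌉ := by
  classical
  induction s using Finset.induction with
  | empty => simp
  | insert a s hx ih =>
    rw [Finset.sum_insert hx, Finset.sum_insert hx]
    calc ⌈((f a + ∑ i ∈ s, f i : ℕ) : ℚ) / (r : ℚ)⌉
        = ⌈((f a : ℚ) / r + ((∑ i ∈ s, f i : ℕ) : ℚ) / r)⌉ := by
          push_cast; rw [add_div]
      _ ≤ ⌈((f a : ℚ) / r)⌉ + ⌈(((∑ i ∈ s, f i : ℕ) : ℚ) / r)⌉ := Int.ceil_add_le _ _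
      _ ≤ _ := by exact add_le_add_right ih _

lemma strict_g {r δ : ℕ} (hr : 0 < r) (hδ : 1 < δ) :
    StrictMono (fun m : ℕ => (m : ℤ) + ((δ : ℤ) - 1) * ⌈(m : ℚ) / (r : ℚ)⌉) := by
  intro a b hab
  have h1 : ⌈(a : ℚ) / (r : ℚ)⌉ ≤ ⌈(b : ℚ) / (r : ℚ)⌉ := by
    apply Int.ceil_le_ceil; gcongr
  have h2 : (0 : ℤ) ≤ (δ : ℤ) - 1 := by omega
  have h3 : (a : ℤ) < b := by exact_mod_cast hab
  have h4 := mul_le_mul_of_nonneg_left h1 h2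
  dsimp only
  omega

noncomputable def MPmap {F : Type*} [Field F] {N M n : ℕ} (A : Matrix (Fin N) (Fin M) F)
    (C : Fin N → Submodule F (Fin n → F)) :
    (∀ i, C i) →ₗ[F] (Fin M × Fin n → F) where
  toFun c := fun p => ∑ i, A i p.1 * (c i : Fin n → F) p.2
  map_add' c c' := by
    funext p
    simp [mul_add, Finset.sum_add_distrib]
  map_smul' a c := by
    funext p
    simp [Finset.mul_sum]
    congr 1; funext i; ring

lemma MPcode_eq_range {F : Type*} [Field F] {N M n : ℕ} (A : Matrix (Fin N) (Fin M) F)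
    (C : Fin N → Submodule F (Fin n → F)) :
    MPcode A C = LinearMap.range (MPmap A C) := by
  have hset : {x : Fin M × Fin n → F | ∃ c : Fin N → Fin n → F,
      (∀ i, c i ∈ C i) ∧ x = fun p => ∑ i, A i p.1 * c i p.2}
      = Set.range (MPmap A C) := by
    ext x
    constructor
    · rintro ⟨c, hc, rfl⟩
      exact ⟨fun i => ⟨c i, hc i⟩, rfl⟩
    · rintro ⟨c, rfl⟩
      exact ⟨fun i => (c i : Fin n → F), fun i => (c i).2, rfl⟩
  rw [MPcode, hset, ← LinearMap.coe_range, Submodule.span_eq]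

lemma MPmap_injective {F : Type*} [Field F] {N n : ℕ} (A : Matrix (Fin N) (Fin N) F)
    (hA : IsUnit A) (C : Fin N → Submodule F (Fin n → F)) :
    Function.Injective (MPmap A C) := by
  rw [← LinearMap.ker_eq_bot]
  rw [Submodule.eq_bot_iff]
  intro c hc
  have hdet : IsUnit A.det := (Matrix.isUnit_iff_isUnit_det A).mp hA
  have h : ∀ p : Fin N × Fin n, ∑ i, A i p.1 * (c i : Fin n → F) p.2 = 0 := by
    intro p
    have := congrFun (LinearMap.mem_ker.mp hc) p
    simpa [MPmap] using this
  have key : ∀ (j : Fin N) (t : Fin n), (c j : Fin n → F) t = 0 := by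
    intro j t
    have h2 : ∀ p1 : Fin N, ∑ i, A i p1 * (c i : Fin n → F) t = 0 := fun p1 => h (p1, t)
    have h3 : ∑ p1, (∑ i, A i p1 * (c i : Fin n → F) t) * A⁻¹ p1 j = 0 := by
      simp [h2]
    have h4 : ∑ p1, (∑ i, A i p1 * (c i : Fin n → F) t) * A⁻¹ p1 j
        = ∑ i, (A * A⁻¹) i j * (c i : Fin n → F) t := by
      simp only [Finset.sum_mul, Matrix.mul_apply]
      rw [Finset.sum_comm]
      congr 1; funext i; congr 1; funext p1; ring
    rw [h4, Matrix.mul_nonsing_inv A hdet] at h3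
    simpa [Matrix.one_apply] using h3
  ext j t
  exact key j t

lemma finrank_MPcode {F : Type*} [Field F] {N n : ℕ} (A : Matrix (Fin N) (Fin N) F)
    (hA : IsUnit A) (C : Fin N → Submodule F (Fin n → F)) :
    Module.finrank F (MPcode A C) = ∑ i, Module.finrank F (C i) := by
  rw [MPcode_eq_range, LinearMap.finrank_range_of_inj (MPmap_injective A hA C)]
  exact Module.finrank_pi_fintype F

lemma mem_MPcode_prod {F : Type*} [Field F] {N n : ℕ} (A : Matrix (Fin N) (Fin N) F)
    (C : Fin N → Submodule F (Fin n → F)) (lam : Fin N → F) (c : Fin n → F)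
    (hc : ∀ m, lam m • c ∈ C m) :
    (fun p : Fin N × Fin n => (∑ m, lam m * A m p.1) * c p.2) ∈ MPcode A C := by
  apply Submodule.subset_span
  refine ⟨fun m => lam m • c, hc, ?_⟩
  funext p
  rw [Finset.sum_mul]
  congr 1; funext m
  simp [smul_eq_mul]; ring


set_option maxHeartbeats 2000000 in
/-- if A is invertible, the constituent codes are nested optimal
(r,δ)-LRCs, D_{N-1}(A) = 1, and the matrix-product code C(A) is an optimal
(r,δ)-LRC, then all the constituent codes coincide, all d_i equal δ, and
⌈Nk₁/r⌉ = N⌈k₁/r⌉. -/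
theorem stmt_15 {F : Type*} [Field F] [DecidableEq F] (N n : ℕ) (hN : 0 < N)
    (r δ : ℕ) (hr : 0 < r) (hδ : 1 < δ)
    (A : Matrix (Fin N) (Fin N) F) (hA : IsUnit A)
    (C : Fin N → Submodule F (Fin n → F)) (k d : Fin N → ℕ)
    (hnested : ∀ i j : Fin N, i ≤ j → C j ≤ C i)
    (hk : ∀ i, Module.finrank F (C i) = k i)
    (hd : ∀ i, minWt (C i : Set (Fin n → F)) = d i)
    (hLRC : ∀ i, IsLRC (C i : Set (Fin n → F)) r δ)
    (hopt : ∀ i, (d i : ℤ) =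
      (n : ℤ) - k i + 1 - (⌈(k i : ℚ) / (r : ℚ)⌉ - 1) * ((δ : ℤ) - 1))
    -- D_{N-1}(A) = 1 : the code generated by the first N-1 rows of A has
    -- minimum distance 1
    (hD : minWt (Submodule.span F {v : Fin N → F | ∃ m : Fin N, m.val < N - 1 ∧ v = A m}
        : Set (Fin N → F)) = 1)
    (hMPLRC : IsLRC (MPcode A C : Set (Fin N × Fin n → F)) r δ)
    (hMPopt : (minWt (MPcode A C : Set (Fin N × Fin n → F)) : ℤ) =
      (N * n : ℤ) - Module.finrank F (MPcode A C) + 1 -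
        (⌈(Module.finrank F (MPcode A C) : ℚ) / (r : ℚ)⌉ - 1) * ((δ : ℤ) - 1)) :
    (∀ i : Fin N, C i = C ⟨0, hN⟩) ∧
    (∀ i : Fin N, d i = δ) ∧
    ⌈((N * k ⟨0, hN⟩ : ℕ) : ℚ) / (r : ℚ)⌉ = (N : ℤ) * ⌈((k ⟨0, hN⟩ : ℕ) : ℚ) / (r : ℚ)⌉ := by
  classical
  -- N ≥ 2
  have hN2 : 2 ≤ N := by
    by_contra hc
    have hN1 : N = 1 := by omega
    subst hN1
    have hempty : {v : Fin 1 → F | ∃ m : Fin 1, m.val < 1 - 1 ∧ v = A m} = ∅ := by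
      ext v; simp
    rw [hempty, Submodule.span_empty] at hD
    have : {w | ∃ x ∈ ((⊥ : Submodule F (Fin 1 → F)) : Set (Fin 1 → F)), x ≠ 0 ∧
        (Finset.univ.filter fun a => x a ≠ 0).card = w} = ∅ := by
      ext w
      simp only [Set.mem_setOf_eq, Set.mem_empty_iff_false, iff_false, not_exists]
      rintro x ⟨hx, hx0, -⟩
      exact hx0 (by simpa using hx)
    rw [minWt, this, Nat.sInf_empty] at hD
    exact absurd hD (by omega)
  set i0 : Fin N := ⟨0, hN⟩ with hi0
  set l : Fin N := ⟨N - 1, by omega⟩ with hl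
  set m2 : Fin N := ⟨N - 2, by omega⟩ with hm2
  have hδ1 : (0 : ℤ) < (δ : ℤ) - 1 := by exact_mod_cast (by omega : (0:ℤ) < (δ:ℤ) - 1)
  -- each C i contains a nonzero vector
  have nonbot : ∀ i, ∃ x ∈ (C i : Set (Fin n → F)), x ≠ 0 := by
    intro i
    by_contra hc
    push_neg at hc
    have hbot : C i = ⊥ := by
      rw [Submodule.eq_bot_iff]
      exact fun x hx => hc x hx
    have hki : k i = 0 := by rw [← hk i, hbot, finrank_bot]
    have hdi : d i = 0 := by
      rw [← hd i]
      have : {w | ∃ x ∈ (C i : Set (Fin n → F)), x ≠ 0 ∧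
          (Finset.univ.filter fun a => x a ≠ 0).card = w} = ∅ := by
        ext w
        simp only [Set.mem_setOf_eq, Set.mem_empty_iff_false, iff_false, not_exists]
        rintro x ⟨hx, hx0, -⟩
        exact hx0 (hc x hx)
      rw [minWt, this, Nat.sInf_empty]
    have := hopt i
    rw [hdi, hki] at this
    simp at this
    omega
  -- δ ≤ d i
  have hdge : ∀ i, (δ : ℤ) ≤ (d i : ℤ) := by
    intro i
    obtain ⟨x, hx, hx0, hxw⟩ := exists_minWt (nonbot i)
    have := (hLRC i).le_wt hx hx0
    rw [hxw, hd i] at this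
    exact_mod_cast this
  -- e1
  have e1 : ∀ i, ((δ : ℤ) - 1) * ⌈(k i : ℚ) / (r : ℚ)⌉ ≤ (n : ℤ) - k i := by
    intro i
    have h1 := hopt i
    have h2 := hdge i
    linarith [h1, h2]
  -- finrank of MP code
  set K : ℕ := ∑ i, k i with hK
  have hKf : Module.finrank F (MPcode A C) = K := by
    rw [finrank_MPcode A hA C]
    exact Finset.sum_congr rfl fun i _ => hk i
  rw [hKf] at hMPopt
  set dC : ℕ := minWt (MPcode A C : Set (Fin N × Fin n → F)) with hdC
  -- minimum-weight codewords of C l and C m2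
  obtain ⟨cl, hcl, hcl0, hclw⟩ := exists_minWt (nonbot l)
  rw [hd l] at hclw
  obtain ⟨cm, hcm, hcm0, hcmw⟩ := exists_minWt (nonbot m2)
  rw [hd m2] at hcmw
  have hdet : IsUnit A.det := (Matrix.isUnit_iff_isUnit_det A).mp hA
  -- F4 : dC ≤ d l
  have hwone : ∀ j : Fin N, wtF (fun j' => (1 : Matrix (Fin N) (Fin N) F) j j') = 1 := by
    intro j
    unfold wtF
    have : (Finset.univ.filter fun j' => (1 : Matrix (Fin N) (Fin N) F) j j' ≠ 0) = {j} := by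
      ext j'
      by_cases h : j = j' <;> simp [Matrix.one_apply, h, eq_comm]
    rw [this, Finset.card_singleton]
  have F4 : dC ≤ d l := by
    set lam : Fin N → F := fun m => A⁻¹ i0 m with hlam
    have hveq : ∀ j, (∑ m, lam m * A m j) = (1 : Matrix (Fin N) (Fin N) F) i0 j := by
      intro j
      rw [← Matrix.nonsing_inv_mul A hdet, Matrix.mul_apply]
    have hmem := mem_MPcode_prod A C lam cl (fun m => by
      refine Submodule.smul_mem _ _ (hnested m l ?_ hcl)
      simp [hl, Fin.le_def]
      omega)
    have hxw : wtF (fun p : Fin N × Fin n => (∑ m, lam m * A m p.1) * cl p.2) = d l := by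
      rw [wtF_prod (fun j => ∑ m, lam m * A m j) cl]
      have : wtF (fun j => ∑ m, lam m * A m j) = 1 := by
        have : (fun j => ∑ m, lam m * A m j)
            = fun j => (1 : Matrix (Fin N) (Fin N) F) i0 j := funext hveq
        rw [this, hwone]
      rw [this, hclw, one_mul]
    have hx0 : (fun p : Fin N × Fin n => (∑ m, lam m * A m p.1) * cl p.2) ≠ 0 := by
      intro hcontra
      rw [← wtF_eq_zero_iff] at hcontra
      rw [hxw] at hcontra
      have := hdge l
      omega
    have := minWt_le hmem hx0
    rw [hxw] at this
    exact this
  -- F4' : dC ≤ d m2 via hD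
  have F4' : dC ≤ d m2 := by
    have hsetne : {w | ∃ x ∈ ((Submodule.span F
        {v : Fin N → F | ∃ m : Fin N, m.val < N - 1 ∧ v = A m}) : Set (Fin N → F)),
        x ≠ 0 ∧ (Finset.univ.filter fun a => x a ≠ 0).card = w}.Nonempty := by
      by_contra hc
      rw [Set.not_nonempty_iff_eq_empty] at hc
      rw [minWt, hc, Nat.sInf_empty] at hD
      exact absurd hD (by omega)
    have h1mem := Nat.sInf_mem hsetne
    rw [← minWt, hD] at h1mem
    obtain ⟨v, hvspan, hv0, hvw⟩ := h1mem
    have hrange : {v : Fin N → F | ∃ m : Fin N, m.val < N - 1 ∧ v = A m}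
        = Set.range (fun t : {m : Fin N // m.val < N - 1} => A t.val) := by
      ext x
      constructor
      · rintro ⟨m, hm, rfl⟩; exact ⟨⟨m, hm⟩, rfl⟩
      · rintro ⟨t, rfl⟩; exact ⟨t.1, t.2, rfl⟩
    rw [hrange] at hvspan
    rw [SetLike.mem_coe, Submodule.mem_span_range_iff_exists_fun] at hvspan
    obtain ⟨lam', hlam'⟩ := hvspan
    set lam : Fin N → F := fun m => if h : m.val < N - 1 then lam' ⟨m, h⟩ else 0 with hlamd
    have hveq : ∀ j, (∑ m, lam m * A m j) = v j := by
      intro j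
      have hsub : ∑ m ∈ Finset.univ.filter (fun m : Fin N => m.val < N - 1), lam m * A m j
          = ∑ m : Fin N, lam m * A m j := by
        apply Finset.sum_subset (Finset.filter_subset _ _)
        intro x _ hx
        simp only [Finset.mem_filter, Finset.mem_univ, true_and] at hx
        rw [hlamd]
        simp [hx]
      rw [← hsub]
      rw [Finset.sum_subtype (p := fun m : Fin N => m.val < N - 1)
        (Finset.univ.filter (fun m : Fin N => m.val < N - 1))
        (by intro x; simp) (fun m => lam m * A m j)]
      have := congrFun hlam' j
      rw [Finset.sum_apply] at this
      rw [← this]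
      apply Finset.sum_congr rfl
      intro t _
      rw [hlamd]
      simp [t.2]
    have hmem := mem_MPcode_prod A C lam cm (fun m => by
      by_cases h : m.val < N - 1
      · refine Submodule.smul_mem _ _ (hnested m m2 ?_ hcm)
        simp [hm2, Fin.le_def]
        omega
      · rw [hlamd]
        simp [h])
    have hxw : wtF (fun p : Fin N × Fin n => (∑ m, lam m * A m p.1) * cm p.2) = d m2 := by
      rw [wtF_prod (fun j => ∑ m, lam m * A m j) cm]
      have hv1 : wtF (fun j => ∑ m, lam m * A m j) = 1 := by
        have : (fun j => ∑ m, lam m * A m j) = v := funext hveq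
        rw [this]
        exact hvw
      rw [hv1, hcmw, one_mul]
    have hx0 : (fun p : Fin N × Fin n => (∑ m, lam m * A m p.1) * cm p.2) ≠ 0 := by
      intro hcontra
      rw [← wtF_eq_zero_iff] at hcontra
      rw [hxw] at hcontra
      have := hdge m2
      omega
    have := minWt_le hmem hx0
    rw [hxw] at this
    exact this
  -- F6 : δ ≤ dC
  have F6 : (δ : ℤ) ≤ (dC : ℤ) := by
    have hne : ∃ x ∈ (MPcode A C : Set (Fin N × Fin n → F)), x ≠ 0 := by
      set lam : Fin N → F := fun m => A⁻¹ i0 m with hlam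
      have hmem := mem_MPcode_prod A C lam cl (fun m => by
        refine Submodule.smul_mem _ _ (hnested m l ?_ hcl)
        simp [hl, Fin.le_def]
        omega)
      refine ⟨_, hmem, ?_⟩
      intro hcontra
      rw [← wtF_eq_zero_iff] at hcontra
      rw [wtF_prod (fun j => ∑ m, lam m * A m j) cl] at hcontra
      have hveq : ∀ j, (∑ m, lam m * A m j) = (1 : Matrix (Fin N) (Fin N) F) i0 j := by
        intro j
        rw [← Matrix.nonsing_inv_mul A hdet, Matrix.mul_apply]
      have : wtF (fun j => ∑ m, lam m * A m j) = 1 := by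
        have : (fun j => ∑ m, lam m * A m j)
            = fun j => (1 : Matrix (Fin N) (Fin N) F) i0 j := funext hveq
        rw [this, hwone]
      rw [this, hclw, one_mul] at hcontra
      have := hdge l
      omega
    obtain ⟨x, hx, hx0, hxw⟩ := exists_minWt hne
    have := hMPLRC.le_wt hx hx0
    rw [hxw] at this
    exact_mod_cast this
  -- the integer bookkeeping
  set ci : Fin N → ℤ := fun i => ⌈(k i : ℚ) / (r : ℚ)⌉ with hci
  have hciapp : ∀ j, ci j = ⌈(k j : ℚ) / (r : ℚ)⌉ := fun j => rfl
  set CK : ℤ := ⌈(K : ℚ) / (r : ℚ)⌉ with hCK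
  set Tc : ℤ := ∑ i ∈ Finset.univ.erase l, ci i with hTc
  set E : ℤ := ∑ i ∈ Finset.univ.erase l, ((n : ℤ) - k i) with hE
  have hKsplit : (∑ i ∈ Finset.univ.erase l, (k i : ℤ)) + (k l : ℤ) = (K : ℤ) := by
    rw [hK]
    push_cast
    exact Finset.sum_erase_add _ _ (Finset.mem_univ l)
  have hcard : (Finset.univ.erase l).card = N - 1 := by
    rw [Finset.card_erase_of_mem (Finset.mem_univ l), Finset.card_univ, Fintype.card_fin]
  have hEval : E = ((N : ℤ) - 1) * n - ((K : ℤ) - k l) := by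
    rw [hE, Finset.sum_sub_distrib, Finset.sum_const, hcard]
    have : ((N - 1 : ℕ) : ℤ) = (N : ℤ) - 1 := by
      push_cast [Nat.cast_sub (by omega : 1 ≤ N)]
      ring
    rw [nsmul_eq_mul, this]
    omega
  have hTcsplit : Tc + ci l = ∑ i, ci i := Finset.sum_erase_add _ _ (Finset.mem_univ l)
  have e2 : CK ≤ Tc + ci l := by
    rw [hTcsplit, hCK, hK]
    exact ceil_sum_le Finset.univ k r
  have e3 : ((δ : ℤ) - 1) * Tc ≤ E := by
    rw [hTc, hE, Finset.mul_sum]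
    apply Finset.sum_le_sum
    intro i _
    exact e1 i
  -- the chain
  have chain1 : E ≤ (CK - ci l) * ((δ : ℤ) - 1) := by
    have h1 : (dC : ℤ) ≤ (d l : ℤ) := by exact_mod_cast F4
    have h2 := hMPopt
    have h3 := hopt l
    rw [hEval]
    linarith [h1, h2, h3]
  have chain2 : (CK - ci l) * ((δ : ℤ) - 1) ≤ Tc * ((δ : ℤ) - 1) := by
    apply mul_le_mul_of_nonneg_right _ (by omega)
    omega
  have chain3 : Tc * ((δ : ℤ) - 1) ≤ E := by
    calc Tc * ((δ : ℤ) - 1) = ((δ : ℤ) - 1) * Tc := by ring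
      _ ≤ E := e3
  have eqE : ((δ : ℤ) - 1) * Tc = E := by
    have := le_antisymm chain3 (le_trans chain1 chain2)
    linarith
  have eqCK : CK = Tc + ci l := by
    have h := le_antisymm chain2 (by calc (CK - ci l) * ((δ:ℤ)-1) ≥ E := chain1
                                      _ ≥ Tc * ((δ:ℤ)-1) := by linarith)
    have := mul_right_cancel₀ (by omega : ((δ : ℤ) - 1) ≠ 0) h
    omega
  have eqdCl : (dC : ℤ) = (d l : ℤ) := by
    have h2 := hMPopt
    have h3 := hopt l
    have h4 := eqE
    rw [hEval] at h4
    linarith [eqCK, h4, h2, h3]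
  -- each term of the erased sum is zero
  have hterm : ∀ i ∈ Finset.univ.erase l, (n : ℤ) - k i - ((δ : ℤ) - 1) * ci i = 0 := by
    have hzero : ∑ i ∈ Finset.univ.erase l, ((n : ℤ) - k i - ((δ : ℤ) - 1) * ci i) = 0 := by
      rw [Finset.sum_sub_distrib, ← Finset.mul_sum, ← hTc, ← hE]
      linarith [eqE]
    intro i hi
    have hnn : ∀ j ∈ Finset.univ.erase l, (0 : ℤ) ≤ (n : ℤ) - k j - ((δ : ℤ) - 1) * ci j := by
      intro j _
      have := e1 j
      rw [hciapp j]
      linarith [this]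
    exact (Finset.sum_eq_zero_iff_of_nonneg hnn).mp hzero i hi
  have hdi_erase : ∀ i ∈ Finset.univ.erase l, (d i : ℤ) = (δ : ℤ) := by
    intro i hi
    have h1 := hterm i hi
    have h2 := hopt i
    linarith [h1, h2]
  -- d m2 = δ, hence dC = δ, hence d l = δ
  have hm2mem : m2 ∈ Finset.univ.erase l := by
    rw [Finset.mem_erase]
    refine ⟨?_, Finset.mem_univ _⟩
    simp [hm2, hl, Fin.ext_iff]
    omega
  have hdm2 : (d m2 : ℤ) = (δ : ℤ) := hdi_erase m2 hm2mem
  have hdCδ : (dC : ℤ) = (δ : ℤ) := by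
    have h1 : (dC : ℤ) ≤ (d m2 : ℤ) := by exact_mod_cast F4'
    omega
  have hdl : (d l : ℤ) = (δ : ℤ) := by omega
  have hdall : ∀ i, (d i : ℤ) = (δ : ℤ) := by
    intro i
    by_cases h : i = l
    · rw [h]; exact hdl
    · exact hdi_erase i (Finset.mem_erase.mpr ⟨h, Finset.mem_univ _⟩)
  -- all k i equal
  have hki : ∀ i, (n : ℤ) - k i = ((δ : ℤ) - 1) * ci i := by
    intro i
    have h1 := hopt i
    rw [hdall i] at h1
    linarith [h1]
  have hkeq : ∀ i, k i = k i0 := by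
    intro i
    apply (strict_g hr hδ).injective
    dsimp only
    have h1 := hki i
    have h2 := hki i0
    rw [hciapp i] at h1
    rw [hciapp i0] at h2
    linarith [h1, h2]
  refine ⟨?_, ?_, ?_⟩
  · intro i
    apply Submodule.eq_of_le_of_finrank_eq (hnested i0 i (by simp [hi0, Fin.le_def]))
    rw [hk i, hk i0, hkeq i]
  · intro i
    have := hdall i
    exact_mod_cast this
  · have hKN : K = N * k i0 := by
      have h1 : ∑ i : Fin N, k i = ∑ _i : Fin N, k i0 := Finset.sum_congr rfl (fun i _ => hkeq i)
      rw [hK, h1, Finset.sum_const, Finset.card_univ, Fintype.card_fin, smul_eq_mul]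
    have hsumci : ∑ i, ci i = (N : ℤ) * ⌈((k i0 : ℕ) : ℚ) / (r : ℚ)⌉ := by
      have h1 : ∑ i : Fin N, ci i = ∑ _i : Fin N, ⌈((k i0 : ℕ) : ℚ) / (r : ℚ)⌉ :=
        Finset.sum_congr rfl (fun i _ => by rw [hciapp i, hkeq i])
      rw [h1, Finset.sum_const, Finset.card_univ, Fintype.card_fin, nsmul_eq_mul]
    calc ⌈((N * k i0 : ℕ) : ℚ) / (r : ℚ)⌉ = CK := by rw [hCK, hKN]
      _ = Tc + ci l := eqCK
      _ = ∑ i, ci i := hTcsplit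
      _ = (N : ℤ) * ⌈((k i0 : ℕ) : ℚ) / (r : ℚ)⌉ := hsumci
end

section
/- Let A be the 2×2 matrix over F_q (q odd) with rows (1,1) and (1,-1), and let C₁ ⊆ F_q^n with generator matrix G₁ = (c₁,…,c_n) and C₂ ⊆ C₁ with generator matrix G₂ = (c₁',…,c_n'). Let C₂' be the code with generator matrix (c₁', -c₂', …, -c_n'). Then the matrix-product code C(A) = [C₁, C₂']·A ⊆ F_q^{2n} has the property that its punctured codes on S₁ = {1} ∪ {n+2,…,2n} and S₂ = {2,…,n+1} are each monomially equivalent to (subcodes of) C₁ + C₂; in particular, if C₁ and C₂ are (r,δ)-LRCs then C(A) is an (r,δ)-LRC. -/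
/-- The matrix-product code [C₁, C₂']·A for A with rows (1,1), (1,-1), where
C₂' is C₂ with coordinates 2,…,n negated (generator matrix (c₁',-c₂',…,-c_n')).
A codeword consists of the blocks c₁ + c₂' and c₁ - c₂'. -/
def MP16 {F : Type*} [Field F] {n : ℕ} (C1 C2 : Submodule F (Fin n → F)) :
    Set (Fin 2 × Fin n → F) :=
  {x | ∃ c1 ∈ C1, ∃ c2 ∈ C2, x = fun p =>
    if p.1 = 0 then c1 p.2 + (if p.2.val = 0 then 1 else -1) * c2 p.2
    else c1 p.2 - (if p.2.val = 0 then 1 else -1) * c2 p.2}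

/-! On `S₁ = {1} ∪ {n+2,…,2n}` a codeword built from `c₁ ∈ C₁`, `c₂ ∈ C₂` reads `c₁ + c₂`,
and on `S₂ = {2,…,n+1}` it reads `c₁ - c₂`: the sign flip in `C₂'` is undone by switching
blocks at the first coordinate. Both lie in `C₁ + C₂ = C₁`, and every coordinate of the
product code lies in `S₁` or `S₂`, so the local recovery sets of `C₁` transport to it. -/

lemma IsLRC.of_forall_comp_mem {ι κ F : Type*} [Fintype ι] [DecidableEq ι] [Fintype κ]
    [DecidableEq κ] [Zero F] [DecidableEq F] {C : Set (ι → F)} {D : Set (κ → F)} {r δ : ℕ}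
    (hC : IsLRC C r δ)
    (hcover : ∀ i : κ, ∃ φ : ι ↪ κ, i ∈ Set.range φ ∧ ∀ x ∈ D, x ∘ φ ∈ C) :
    IsLRC D r δ := by
  intro i
  obtain ⟨φ, ⟨a, rfl⟩, hφ⟩ := hcover i
  obtain ⟨S, haS, hcard, hrec⟩ := hC a
  refine ⟨S.map φ, Finset.mem_map_of_mem φ haS, (Finset.card_map φ).trans_le hcard, ?_⟩
  rintro x hx ⟨_, hjS, hxj⟩
  obtain ⟨b, hbS, rfl⟩ := Finset.mem_map.1 hjS
  rw [Finset.filter_map, Finset.card_map]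
  exact hrec (x ∘ φ) (hφ x hx) ⟨b, hbS, hxj⟩

namespace MP16

variable {n : ℕ}

/-- `sheet 0` is `S₁` and `sheet 1` is `S₂`. -/
def sheet (n : ℕ) (s : Fin 2) : Fin n ↪ Fin 2 × Fin n :=
  ⟨fun a => (if a.val = 0 then s else s + 1, a), fun _ _ h => congrArg Prod.snd h⟩

lemma mem_range_sheet (b : Fin 2) (a : Fin n) :
    (b, a) ∈ Set.range (sheet n (if a.val = 0 then b else b + 1)) := by
  refine ⟨a, ?_⟩
  by_cases ha : a.val = 0
  · simp [sheet, ha]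
  · fin_cases b <;> simp [sheet, ha]

lemma comp_sheet_zero {α : Type*} (x : Fin 2 × Fin n → α) :
    x ∘ sheet n 0 = fun a => if a.val = 0 then x (0, a) else x (1, a) := by
  funext a
  by_cases ha : a.val = 0 <;> simp [sheet, ha]

lemma comp_sheet_one {α : Type*} (x : Fin 2 × Fin n → α) :
    x ∘ sheet n 1 = fun a => if a.val = 0 then x (1, a) else x (0, a) := by
  funext a
  by_cases ha : a.val = 0 <;> simp [sheet, ha]

variable {F : Type*} [Field F] {C1 C2 : Submodule F (Fin n → F)}

lemma comp_sheet_mem_sup {x : Fin 2 × Fin n → F} (hx : x ∈ MP16 C1 C2) (s : Fin 2) :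
    x ∘ sheet n s ∈ C1 ⊔ C2 := by
  obtain ⟨c1, hc1, c2, hc2, rfl⟩ := hx
  have hc1' : c1 ∈ C1 ⊔ C2 := Submodule.mem_sup_left hc1
  have hc2' : c2 ∈ C1 ⊔ C2 := Submodule.mem_sup_right hc2
  fin_cases s
  · convert Submodule.add_mem _ hc1' hc2' using 1
    funext a
    by_cases ha : a.val = 0 <;> simp [sheet, ha]
  · convert Submodule.sub_mem _ hc1' hc2' using 1
    funext a
    by_cases ha : a.val = 0 <;> simp [sheet, ha, sub_eq_add_neg]

lemma isLRC (h21 : C2 ≤ C1) {r δ : ℕ} [DecidableEq F] (hC1 : IsLRC (C1 : Set (Fin n → F)) r δ) :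
    IsLRC (MP16 C1 C2) r δ := by
  refine hC1.of_forall_comp_mem fun ⟨b, a⟩ => ⟨_, mem_range_sheet b a, fun x hx => ?_⟩
  simpa only [SetLike.mem_coe, sup_eq_left.2 h21] using comp_sheet_mem_sup hx _

end MP16

theorem stmt_16_general
    {F : Type*} [Field F] [DecidableEq F]
    (n : ℕ) (r δ : ℕ)
    (C1 C2 : Submodule F (Fin n → F)) (h21 : C2 ≤ C1) :
    (∀ x ∈ MP16 C1 C2,
      (fun a : Fin n => if a.val = 0 then x (0, a) else x (1, a)) ∈ C1 ⊔ C2 ∧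
      (fun a : Fin n => if a.val = 0 then x (1, a) else x (0, a)) ∈ C1 ⊔ C2) ∧
    (IsLRC (C1 : Set (Fin n → F)) r δ → IsLRC (C2 : Set (Fin n → F)) r δ →
      IsLRC (MP16 C1 C2) r δ) := by
  refine ⟨fun x hx => ?_, fun hC1 _ => MP16.isLRC h21 hC1⟩
  rw [← MP16.comp_sheet_zero, ← MP16.comp_sheet_one]
  exact ⟨MP16.comp_sheet_mem_sup hx 0, MP16.comp_sheet_mem_sup hx 1⟩

/-- the punctured codes of [C₁,C₂']·A on
S₁ = {1} ∪ {n+2,…,2n} and S₂ = {2,…,n+1} are (monomially equivalent to)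
subcodes of C₁ + C₂; in particular, if C₁ and C₂ are (r,δ)-LRCs then so is the
matrix-product code. -/
theorem stmt_16 (p e q : ℕ) (hp : p.Prime) (hodd : Odd q) (he : 0 < e)
    (hq : q = p ^ e)
    {F : Type*} [Field F] [Fintype F] [DecidableEq F] (hF : Fintype.card F = q)
    (n : ℕ) (hn : 0 < n) (r δ : ℕ)
    (C1 C2 : Submodule F (Fin n → F)) (h21 : C2 ≤ C1) :
    (∀ x ∈ MP16 C1 C2,
      (fun a : Fin n => if a.val = 0 then x (0, a) else x (1, a)) ∈ C1 ⊔ C2 ∧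
      (fun a : Fin n => if a.val = 0 then x (1, a) else x (0, a)) ∈ C1 ⊔ C2) ∧
    (IsLRC (C1 : Set (Fin n → F)) r δ → IsLRC (C2 : Set (Fin n → F)) r δ →
      IsLRC (MP16 C1 C2) r δ) :=
  stmt_16_general n r δ C1 C2 h21
end
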